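/- arXiv:2601.19252 — 13 statements merged into one kernel-verified Lean document; each statement's English description precedes it below -/
import Mathlib

section
/- Let κ : I → ℝ be positive and ρ : I → ℝ smooth with ρ' nowhere zero, and let λ ≠ 0, μ be constants with m = −μ/λ. Then the equation −λρκ = λ·(κ(1+ρ²)/ρ')' + μ·(1/ρ')' holds on I if and only if the equation (ρ'/(κ(1+ρ²)^{3/2}))' = m·ρ''/(κ²(1+ρ²)^{5/2}) holds on I. -/
noncomputable section

/-- Equivalence of the two natural equations (conc2) and (conc4) for proper
concircular helices: with `m = -μ/λ`, the equation
`-λρκ = λ (κ(1+ρ²)/ρ')' + μ (1/ρ')'` holds on `I` iff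
`(ρ'/(κ(1+ρ²)^{3/2}))' = m ρ''/(κ²(1+ρ²)^{5/2})` holds on `I`. -/
theorem conc2_iff_conc4
    (I : Set ℝ) (hI : IsOpen I)
    (κ ρ : ℝ → ℝ)
    (hκ : ContDiff ℝ (⊤ : ℕ∞) κ) (hρ : ContDiff ℝ (⊤ : ℕ∞) ρ)
    (hκpos : ∀ s, 0 < κ s) (hρ' : ∀ s, deriv ρ s ≠ 0)
    (lam μ m : ℝ) (hlam : lam ≠ 0) (hm : m = -μ / lam) :
    (∀ s ∈ I,
        -(lam * ρ s * κ s) =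
          lam * deriv (fun t => κ t * (1 + ρ t ^ 2) / deriv ρ t) s +
            μ * deriv (fun t => 1 / deriv ρ t) s) ↔
      (∀ s ∈ I,
        deriv (fun t => deriv ρ t / (κ t * (1 + ρ t ^ 2) ^ ((3 : ℝ) / 2))) s =
          m * deriv (deriv ρ) s / (κ s ^ 2 * (1 + ρ s ^ 2) ^ ((5 : ℝ) / 2))) := by
  have hμ : μ = -(m * lam) := by rw [hm]; field_simp
  have hρ1 : Differentiable ℝ (deriv ρ) := by
    have := (contDiff_infty_iff_deriv.mp (hρ.of_le (by simp))).2
    exact this.differentiable (by simp)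
  refine forall₂_congr fun s _ => ?_
  -- abbreviations
  set k := κ s with hk_def
  set k' := deriv κ s with hk'_def
  set p := ρ s with hp_def
  set p1 := deriv ρ s with hp1_def
  set p2 := deriv (deriv ρ) s with hp2_def
  have hk : HasDerivAt κ k' s := ((hκ.differentiable (by simp)) s).hasDerivAt
  have hp : HasDerivAt ρ p1 s := ((hρ.differentiable (by simp)) s).hasDerivAt
  have hp1 : HasDerivAt (deriv ρ) p2 s := (hρ1 s).hasDerivAt
  have upos : (0:ℝ) < 1 + p ^ 2 := by positivity
  have kpos : 0 < k := hκpos s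
  have kne : k ≠ 0 := ne_of_gt kpos
  have p1ne : p1 ≠ 0 := hρ' s
  have hu : HasDerivAt (fun t => 1 + ρ t ^ 2) (2 * p ^ 1 * p1) s := by
    simpa using (hp.pow 2).const_add 1
  have hA : deriv (fun t => κ t * (1 + ρ t ^ 2) / deriv ρ t) s =
      ((k' * (1 + p ^ 2) + k * (2 * p ^ 1 * p1)) * p1 - k * (1 + p ^ 2) * p2) / p1 ^ 2 :=
    ((hk.mul hu).div hp1 p1ne).deriv
  have hB : deriv (fun t => 1 / deriv ρ t) s = (0 * p1 - 1 * p2) / p1 ^ 2 :=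
    ((hasDerivAt_const s (1:ℝ)).div hp1 p1ne).deriv
  have rne : (1 + p ^ 2) ^ ((3:ℝ)/2) ≠ 0 := by positivity
  have hr : HasDerivAt (fun t => (1 + ρ t ^ 2) ^ ((3:ℝ)/2))
      (2 * p ^ 1 * p1 * ((3:ℝ)/2) * (1 + p ^ 2) ^ ((3:ℝ)/2 - 1)) s :=
    hu.rpow_const (Or.inl (ne_of_gt upos))
  have hG : deriv (fun t => deriv ρ t / (κ t * (1 + ρ t ^ 2) ^ ((3:ℝ)/2))) s =
      (p2 * (k * (1 + p ^ 2) ^ ((3:ℝ)/2)) -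
        p1 * (k' * (1 + p ^ 2) ^ ((3:ℝ)/2) +
          k * (2 * p ^ 1 * p1 * ((3:ℝ)/2) * (1 + p ^ 2) ^ ((3:ℝ)/2 - 1)))) /
        (k * (1 + p ^ 2) ^ ((3:ℝ)/2)) ^ 2 :=
    (hp1.div (hk.mul hr) (mul_ne_zero kne rne)).deriv
  rw [hA, hB, hG]
  -- express rpow's via b = (1+p^2)^(1/2)
  set b := (1 + p ^ 2) ^ ((1:ℝ)/2) with hb_def
  have bpos : 0 < b := Real.rpow_pos_of_pos upos _
  have hb2 : b ^ 2 = 1 + p ^ 2 := by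
    rw [hb_def, ← Real.rpow_natCast ((1 + p ^ 2) ^ ((1:ℝ)/2)) 2,
      ← Real.rpow_mul (le_of_lt upos)]
    norm_num
  have h32 : (1 + p ^ 2) ^ ((3:ℝ)/2) = b ^ 3 := by
    rw [hb_def, ← Real.rpow_natCast ((1 + p ^ 2) ^ ((1:ℝ)/2)) 3,
      ← Real.rpow_mul (le_of_lt upos)]
    norm_num
  have h52 : (1 + p ^ 2) ^ ((5:ℝ)/2) = b ^ 5 := by
    rw [hb_def, ← Real.rpow_natCast ((1 + p ^ 2) ^ ((1:ℝ)/2)) 5,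
      ← Real.rpow_mul (le_of_lt upos)]
    norm_num
  have h12 : (1 + p ^ 2) ^ ((3:ℝ)/2 - 1) = b := by
    rw [hb_def]; norm_num
  have bne : b ≠ 0 := ne_of_gt bpos
  rw [h32, h52, h12, ← hb2]
  constructor
  · intro h
    rw [hμ] at h
    field_simp at h ⊢
    have h2 : lam * (k * b ^ 2 * p2 - k' * b ^ 2 * p1 - 3 * k * p * p1 ^ 2) =
        lam * (m * p2) := by linear_combination lam * h
    have hE := mul_left_cancel₀ hlam h2
    linear_combination hE
  · intro h
    rw [hμ]
    field_simp at h ⊢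
    have cne : (2 * k ^ 2 * b ^ 6 : ℝ) ≠ 0 := by positivity
    have h2 : (2 * k ^ 2 * b ^ 6) * (k * b ^ 2 * p2 - k' * b ^ 2 * p1 - 3 * k * p * p1 ^ 2) =
        (2 * k ^ 2 * b ^ 6) * (m * p2) := by linear_combination (2 * k ^ 2 * b ^ 6) * h
    have hE := mul_left_cancel₀ cne h2
    linear_combination hE
end
end

section
/- Let γ : I → ℝ³ be a unit-speed curve with κ_γ > 0 and ρ = τ_γ/κ_γ satisfying ρ' ≠ 0. Suppose the differential equation (ρ'/(κ_γ(1+ρ²)^{3/2}))' = m·ρ''/(κ_γ²(1+ρ²)^{5/2}) holds for a nonzero constant m. Set μ = −λm for a nonzero constant λ, define b(s) = (μ + λκ_γ(s)(1+ρ(s)²))/ρ'(s), and let V(s) = b(s)(ρ(s)T_γ(s) + B_γ(s)) + λ N_γ(s). Then V'(s) = μ·T_γ(s) = μ·γ'(s) for all s. -/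
open scoped InnerProductSpace

noncomputable section

/-- If the natural equation (conc4) holds with nonzero constant `m`, then the
vector field `V = b D_γ + λ N_γ` along γ (with `D_γ = ρ T_γ + B_γ` the modified
Darboux field and `b = (μ + λκ(1+ρ²))/ρ'`, `μ = -λ m`) satisfies `V' = μ T_γ`. -/
theorem concircular_field_derivative
    (γ T N B : ℝ → EuclideanSpace ℝ (Fin 3))
    (κ τ ρ b : ℝ → ℝ) (lam μ m : ℝ)
    -- orthonormal Frenet frame of the unit-speed curve γ
    (hTunit : ∀ s, ‖T s‖ = 1) (hNunit : ∀ s, ‖N s‖ = 1) (hBunit : ∀ s, ‖B s‖ = 1)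
    (hTN : ∀ s, ⟪T s, N s⟫_ℝ = 0) (hTB : ∀ s, ⟪T s, B s⟫_ℝ = 0)
    (hNB : ∀ s, ⟪N s, B s⟫_ℝ = 0)
    (hγ : ∀ s, deriv γ s = T s)
    (hT' : ∀ s, deriv T s = κ s • N s)
    (hN' : ∀ s, deriv N s = -κ s • T s + τ s • B s)
    (hB' : ∀ s, deriv B s = -τ s • N s)
    (hTd : Differentiable ℝ T) (hNd : Differentiable ℝ N) (hBd : Differentiable ℝ B)
    (hκpos : ∀ s, 0 < κ s)
    (hρ : ∀ s, ρ s = τ s / κ s) (hρd : ContDiff ℝ (⊤ : ℕ∞) ρ) (hκd : ContDiff ℝ (⊤ : ℕ∞) κ)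
    (hρ' : ∀ s, deriv ρ s ≠ 0)
    -- constants
    (hm : m ≠ 0) (hlam : lam ≠ 0) (hμ : μ = -lam * m)
    -- the differential equation (conc4)
    (hconc4 : ∀ s,
      deriv (fun t => deriv ρ t / (κ t * (1 + ρ t ^ 2) ^ ((3 : ℝ) / 2))) s =
        m * deriv (deriv ρ) s / (κ s ^ 2 * (1 + ρ s ^ 2) ^ ((5 : ℝ) / 2)))
    -- definition of b
    (hb : ∀ s, b s = (μ + lam * κ s * (1 + ρ s ^ 2)) / deriv ρ s) :
    ∀ s, deriv (fun t => b t • (ρ t • T t + B t) + lam • N t) s = μ • T s := by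
  have hρdiff : Differentiable ℝ ρ := hρd.differentiable (by simp)
  have hρ'c : ContDiff ℝ (⊤:ℕ∞) (deriv ρ) := (contDiff_infty_iff_deriv.mp (hρd.of_le (by simp))).2
  have hρ'diff : Differentiable ℝ (deriv ρ) := hρ'c.differentiable (by simp)
  have hκdiff : Differentiable ℝ κ := hκd.differentiable (by simp)
  intro s
  have hκne : κ s ≠ 0 := (hκpos s).ne'
  have hP : (0:ℝ) < 1 + ρ s ^ 2 := by positivity
  have hτ : τ s = ρ s * κ s := by rw [hρ]; field_simp
  -- derivatives at s
  have hκs : HasDerivAt κ (deriv κ s) s := (hκdiff s).hasDerivAt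
  have hρs : HasDerivAt ρ (deriv ρ s) s := (hρdiff s).hasDerivAt
  have hρ2s : HasDerivAt (deriv ρ) (deriv (deriv ρ) s) s := (hρ'diff s).hasDerivAt
  have hPd : HasDerivAt (fun t => 1 + ρ t ^ 2) (2 * ρ s * deriv ρ s) s := by
    have := (hρs.pow 2).const_add 1
    exact this.congr_deriv (by norm_num)
  have hP32 : HasDerivAt (fun t => (1 + ρ t ^ 2) ^ ((3:ℝ)/2))
      (2 * ρ s * deriv ρ s * ((3:ℝ)/2) * (1 + ρ s ^ 2) ^ ((3:ℝ)/2 - 1)) s :=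
    hPd.rpow_const (Or.inl hP.ne')
  have hden : κ s * (1 + ρ s ^ 2) ^ ((3:ℝ)/2) ≠ 0 := by
    have := Real.rpow_pos_of_pos hP ((3:ℝ)/2); positivity
  have hfD : HasDerivAt (fun t => deriv ρ t / (κ t * (1 + ρ t ^ 2) ^ ((3:ℝ)/2)))
      ((deriv (deriv ρ) s * (κ s * (1 + ρ s ^ 2) ^ ((3:ℝ)/2)) -
        deriv ρ s * (deriv κ s * (1 + ρ s ^ 2) ^ ((3:ℝ)/2) +
          κ s * (2 * ρ s * deriv ρ s * ((3:ℝ)/2) * (1 + ρ s ^ 2) ^ ((3:ℝ)/2 - 1)))) /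
        (κ s * (1 + ρ s ^ 2) ^ ((3:ℝ)/2)) ^ 2) s :=
    hρ2s.div (hκs.mul hP32) hden
  -- rpow manipulations
  set q : ℝ := (1 + ρ s ^ 2) ^ ((1:ℝ)/2) with hqdef
  have hq : (0:ℝ) < q := Real.rpow_pos_of_pos hP _
  have hq2 : q * q = 1 + ρ s ^ 2 := by
    rw [hqdef, ← Real.rpow_add hP]; norm_num
  have h32 : (1 + ρ s ^ 2) ^ ((3:ℝ)/2) = (1 + ρ s ^ 2) * q := by
    rw [show (3:ℝ)/2 = 1 + 1/2 by norm_num, Real.rpow_add hP, Real.rpow_one]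
  have h12 : (1 + ρ s ^ 2) ^ ((3:ℝ)/2 - 1) = q := by norm_num [hqdef]
  have h52 : (1 + ρ s ^ 2) ^ ((5:ℝ)/2) = (1 + ρ s ^ 2) ^ 2 * q := by
    rw [show (5:ℝ)/2 = (2:ℕ) + 1/2 by norm_num, Real.rpow_add hP, Real.rpow_natCast]
  -- key scalar identity E
  have hE : κ s * deriv (deriv ρ) s * (1 + ρ s ^ 2)
      - deriv κ s * deriv ρ s * (1 + ρ s ^ 2)
      - 3 * κ s * ρ s * deriv ρ s ^ 2 = m * deriv (deriv ρ) s := by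
    have heq := hconc4 s
    rw [hfD.deriv, h32, h12, h52] at heq
    field_simp at heq
    have hfac : ((2:ℝ) * κ s ^ 2 * (1 + ρ s ^ 2) ^ 2 * (q * q)) ≠ 0 := by positivity
    apply mul_right_cancel₀ hfac
    linear_combination (2 * κ s ^ 2 * (1 + ρ s ^ 2) ^ 2 * (q * q)) * heq
  -- derivative of b
  have hbnum : HasDerivAt (fun t => μ + lam * κ t * (1 + ρ t ^ 2))
      (lam * deriv κ s * (1 + ρ s ^ 2) + lam * κ s * (2 * ρ s * deriv ρ s)) s := by
    have := ((hκs.const_mul lam).mul hPd).const_add μ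
    exact this
  have hbfun : b = fun t => (μ + lam * κ t * (1 + ρ t ^ 2)) / deriv ρ t := funext hb
  have hbd : HasDerivAt b
      (((lam * deriv κ s * (1 + ρ s ^ 2) + lam * κ s * (2 * ρ s * deriv ρ s)) * deriv ρ s -
        (μ + lam * κ s * (1 + ρ s ^ 2)) * deriv (deriv ρ) s) / deriv ρ s ^ 2) s := by
    rw [hbfun]; exact hbnum.div hρ2s (hρ' s)
  have hbd2 : HasDerivAt b (-(lam * (ρ s * κ s))) s := by
    convert hbd using 1
    rw [eq_div_iff (pow_ne_zero 2 (hρ' s))]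
    linear_combination lam * hE + deriv (deriv ρ) s * hμ
  have hbval : b s * deriv ρ s = μ + lam * κ s * (1 + ρ s ^ 2) := by
    rw [hb, div_mul_cancel₀ _ (hρ' s)]
  -- Frenet derivatives as HasDerivAt
  have hTs : HasDerivAt T (κ s • N s) s := hT' s ▸ (hTd s).hasDerivAt
  have hNs : HasDerivAt N (-κ s • T s + τ s • B s) s := hN' s ▸ (hNd s).hasDerivAt
  have hBs : HasDerivAt B (-τ s • N s) s := hB' s ▸ (hBd s).hasDerivAt
  have hinner : HasDerivAt (fun t => ρ t • T t + B t)
      ((ρ s • (κ s • N s) + deriv ρ s • T s) + -τ s • N s) s :=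
    (hρs.smul hTs).add hBs
  have hV : HasDerivAt (fun t => b t • (ρ t • T t + B t) + lam • N t)
      ((b s • ((ρ s • (κ s • N s) + deriv ρ s • T s) + -τ s • N s) +
        -(lam * (ρ s * κ s)) • (ρ s • T s + B s)) +
       lam • (-κ s • T s + τ s • B s)) s :=
    (hbd2.smul hinner).add (hNs.const_smul lam)
  rw [hV.deriv, hτ]
  match_scalars
  · ring
  · linear_combination hbval
  · ring
end
end

section
/- A unit-speed curve γ in ℝ³ with κ_γ > 0 and ρ = τ_γ/κ_γ satisfying ρ' ≠ 0 is a proper concircular helix (i.e., there exist constants λ ≠ 0, μ ≠ 0 and a vector v ∈ ℝ³ such that ⟨N_γ(s), μγ(s) + v⟩ = λ for all s) if and only if there is a nonzero constant m with (ρ'/(κ_γ(1+ρ²)^{3/2}))' = m·ρ''/(κ_γ²(1+ρ²)^{5/2}) on I. -/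
open scoped InnerProductSpace

noncomputable section

private lemma sqrt_pows {w : ℝ} (h : 0 < w) :
    w ^ ((3:ℝ)/2) = w * Real.sqrt w ∧ w ^ ((3:ℝ)/2 - 1) = Real.sqrt w ∧
      w ^ ((5:ℝ)/2) = w ^ 2 * Real.sqrt w := by
  have h32 : (3:ℝ)/2 = 1 + 1/2 := by norm_num
  have h52 : (5:ℝ)/2 = 2 + 1/2 := by norm_num
  have h12 : (3:ℝ)/2 - 1 = 1/2 := by norm_num
  have hsq : w ^ ((1:ℝ)/2) = Real.sqrt w := (Real.sqrt_eq_rpow w).symm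
  refine ⟨?_, ?_, ?_⟩
  · rw [h32, Real.rpow_add h, Real.rpow_one, hsq]
  · rw [h12, hsq]
  · rw [h52, Real.rpow_add h, hsq]
    norm_num [Real.rpow_two]

private lemma deriv_formula (κ ρ : ℝ → ℝ) (hρd : ContDiff ℝ (⊤ : ℕ∞) ρ) (hκd : ContDiff ℝ (⊤ : ℕ∞) κ)
    (hκpos : ∀ s, 0 < κ s) (s : ℝ) :
    deriv (fun t => deriv ρ t / (κ t * (1 + ρ t ^ 2) ^ ((3 : ℝ) / 2))) s =
      (κ s * (1 + ρ s ^ 2) * deriv (deriv ρ) s - deriv κ s * (1 + ρ s ^ 2) * deriv ρ s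
        - 3 * κ s * ρ s * deriv ρ s ^ 2) / (κ s ^ 2 * (1 + ρ s ^ 2) ^ ((5 : ℝ) / 2)) := by
  have hρ1 : Differentiable ℝ ρ := hρd.differentiable (by simp)
  have hρ'd : Differentiable ℝ (deriv ρ) :=
    ((contDiff_infty_iff_deriv.mp (hρd.of_le (by simp))).2).differentiable (by simp)
  have h1 : HasDerivAt ρ (deriv ρ s) s := (hρ1 s).hasDerivAt
  have h2 : HasDerivAt (deriv ρ) (deriv (deriv ρ) s) s :=
    (hρ'd s).hasDerivAt
  have hκ1 : HasDerivAt κ (deriv κ s) s := ((hκd.differentiable (by simp)) s).hasDerivAt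
  have hwpos : 0 < 1 + ρ s ^ 2 := by positivity
  have hw : HasDerivAt (fun t => 1 + ρ t ^ 2) (2 * ρ s * deriv ρ s) s := by
    have := (h1.pow 2).const_add 1
    refine this.congr_deriv (Eq.symm ?_)
    push_cast; ring
  have hw32 : HasDerivAt (fun t => (1 + ρ t ^ 2) ^ ((3:ℝ)/2))
      ((2 * ρ s * deriv ρ s) * ((3:ℝ)/2) * (1 + ρ s ^ 2) ^ ((3:ℝ)/2 - 1)) s :=
    hw.rpow_const (Or.inl (ne_of_gt hwpos))
  have hκne : κ s ≠ 0 := (hκpos s).ne'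
  have hdenne : κ s * (1 + ρ s ^ 2) ^ ((3:ℝ)/2) ≠ 0 := by
    have := hκpos s
    have : (0:ℝ) < (1 + ρ s ^ 2) ^ ((3:ℝ)/2) := Real.rpow_pos_of_pos hwpos _
    positivity
  have hD : deriv (fun t => deriv ρ t / (κ t * (1 + ρ t ^ 2) ^ ((3 : ℝ) / 2))) s = _ :=
    (h2.div (hκ1.mul hw32) hdenne).deriv
  simp only [Pi.mul_apply] at hD
  rw [hD]
  obtain ⟨e1, e2, e3⟩ := sqrt_pows hwpos
  rw [e1, e2, e3]
  have hrpos : 0 < Real.sqrt (1 + ρ s ^ 2) := Real.sqrt_pos.mpr hwpos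
  field_simp
  ring

/-- Characterization of proper concircular helices: a unit-speed curve with
`κ > 0` and `ρ' ≠ 0` admits constants `λ ≠ 0`, `μ ≠ 0` and a vector `v` with
`⟨N_γ, μγ + v⟩ = λ` iff `(ρ'/(κ(1+ρ²)^{3/2}))' = m ρ''/(κ²(1+ρ²)^{5/2})`
for some nonzero constant `m`. -/
theorem proper_concircular_helix_characterization
    (γ T N B : ℝ → EuclideanSpace ℝ (Fin 3))
    (κ τ ρ : ℝ → ℝ)
    -- orthonormal Frenet frame of the unit-speed curve γ
    (hTunit : ∀ s, ‖T s‖ = 1) (hNunit : ∀ s, ‖N s‖ = 1) (hBunit : ∀ s, ‖B s‖ = 1)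
    (hTN : ∀ s, ⟪T s, N s⟫_ℝ = 0) (hTB : ∀ s, ⟪T s, B s⟫_ℝ = 0)
    (hNB : ∀ s, ⟪N s, B s⟫_ℝ = 0)
    (hγ : ∀ s, deriv γ s = T s)
    (hT' : ∀ s, deriv T s = κ s • N s)
    (hN' : ∀ s, deriv N s = -κ s • T s + τ s • B s)
    (hB' : ∀ s, deriv B s = -τ s • N s)
    (hγd : Differentiable ℝ γ)
    (hTd : Differentiable ℝ T) (hNd : Differentiable ℝ N) (hBd : Differentiable ℝ B)
    (hκpos : ∀ s, 0 < κ s)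
    (hρ : ∀ s, ρ s = τ s / κ s) (hρd : ContDiff ℝ (⊤ : ℕ∞) ρ) (hκd : ContDiff ℝ (⊤ : ℕ∞) κ)
    (hρ' : ∀ s, deriv ρ s ≠ 0) :
    (∃ (lam μ : ℝ) (v : EuclideanSpace ℝ (Fin 3)), lam ≠ 0 ∧ μ ≠ 0 ∧
        ∀ s, ⟪N s, μ • γ s + v⟫_ℝ = lam) ↔
      (∃ m : ℝ, m ≠ 0 ∧ ∀ s,
        deriv (fun t => deriv ρ t / (κ t * (1 + ρ t ^ 2) ^ ((3 : ℝ) / 2))) s =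
          m * deriv (deriv ρ) s / (κ s ^ 2 * (1 + ρ s ^ 2) ^ ((5 : ℝ) / 2))) := by
  have hρ1 : Differentiable ℝ ρ := hρd.differentiable (by simp)
  have hρ'd : Differentiable ℝ (deriv ρ) :=
    ((contDiff_infty_iff_deriv.mp (hρd.of_le (by simp))).2).differentiable (by simp)
  have h1 : ∀ s, HasDerivAt ρ (deriv ρ s) s := fun s => (hρ1 s).hasDerivAt
  have h2 : ∀ s, HasDerivAt (deriv ρ) (deriv (deriv ρ) s) s := fun s => (hρ'd s).hasDerivAt
  have hκ1 : ∀ s, HasDerivAt κ (deriv κ s) s := fun s => ((hκd.differentiable (by simp)) s).hasDerivAt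
  have hκne : ∀ s, κ s ≠ 0 := fun s => (hκpos s).ne'
  have hτ : ∀ s, τ s = ρ s * κ s := fun s => by
    rw [hρ s]; exact (div_mul_cancel₀ _ (hκne s)).symm
  have hγT : ∀ s, HasDerivAt γ (T s) s := fun s => hγ s ▸ (hγd s).hasDerivAt
  have hTder : ∀ s, HasDerivAt T (κ s • N s) s := fun s => hT' s ▸ (hTd s).hasDerivAt
  have hNder : ∀ s, HasDerivAt N (-κ s • T s + τ s • B s) s := fun s => hN' s ▸ (hNd s).hasDerivAt
  have hBder : ∀ s, HasDerivAt B (-τ s • N s) s := fun s => hB' s ▸ (hBd s).hasDerivAt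
  have hw : ∀ s, HasDerivAt (fun t => 1 + ρ t ^ 2) (2 * ρ s * deriv ρ s) s := fun s => by
    have := ((h1 s).pow 2).const_add 1
    refine this.congr_deriv (Eq.symm ?_)
    push_cast; ring
  have hwpos : ∀ s, (0:ℝ) < 1 + ρ s ^ 2 := fun s => by positivity
  have hD : ∀ s, κ s ^ 2 * (1 + ρ s ^ 2) ^ ((5:ℝ)/2) ≠ 0 := fun s => by
    have h5 : (0:ℝ) < (1 + ρ s ^ 2) ^ ((5:ℝ)/2) := Real.rpow_pos_of_pos (hwpos s) _
    have := hκpos s; positivity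
  have hTT : ∀ s, ⟪T s, T s⟫_ℝ = 1 := fun s => by
    rw [real_inner_self_eq_norm_sq, hTunit]; norm_num
  have hNN : ∀ s, ⟪N s, N s⟫_ℝ = 1 := fun s => by
    rw [real_inner_self_eq_norm_sq, hNunit]; norm_num
  constructor
  · -- forward direction
    rintro ⟨lam, μ, v, hlam, hμ, hYc⟩
    have hYder : ∀ s, HasDerivAt (fun t => μ • γ t + v) (μ • T s) s :=
      fun s => ((hγT s).const_smul μ).add_const v
    have hb : ∀ s, HasDerivAt (fun t => ⟪B t, μ • γ t + v⟫_ℝ) (-(τ s * lam)) s := by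
      intro s
      have h := HasDerivAt.inner ℝ (hBder s) (hYder s)
      refine h.congr_deriv (Eq.symm ?_)
      simp only [real_inner_smul_left, real_inner_smul_right]
      rw [real_inner_comm (T s) (B s), hTB, hYc]
      ring
    have ha : ∀ s, HasDerivAt (fun t => ⟪T t, μ • γ t + v⟫_ℝ) (κ s * lam + μ) s := by
      intro s
      have h := HasDerivAt.inner ℝ (hTder s) (hYder s)
      refine h.congr_deriv (Eq.symm ?_)
      simp only [real_inner_smul_left, real_inner_smul_right]
      rw [hTT s, hYc s]
      ring
    have hab : ∀ s, ⟪T s, μ • γ s + v⟫_ℝ = ρ s * ⟪B s, μ • γ s + v⟫_ℝ := by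
      intro s
      have h := HasDerivAt.inner ℝ (hNder s) (hYder s)
      have hc : HasDerivAt (fun t => ⟪N t, μ • γ t + v⟫_ℝ) 0 s := by
        have he : (fun t => ⟪N t, μ • γ t + v⟫_ℝ) = fun _ => lam := funext hYc
        rw [he]; exact hasDerivAt_const s lam
      have h0 := hc.unique h
      simp only [inner_add_left, real_inner_smul_left, real_inner_smul_right] at h0
      rw [real_inner_comm (T s) (N s), hTN s] at h0
      rw [hρ s, div_mul_eq_mul_div, eq_div_iff (hκne s)]
      linear_combination h0
    have key1 : ∀ s, deriv ρ s * ⟪B s, μ • γ s + v⟫_ℝ = lam * κ s * (1 + ρ s ^ 2) + μ := by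
      intro s
      have hmul := (h1 s).mul (hb s)
      have heq : (fun t => ⟪T t, μ • γ t + v⟫_ℝ)
          = fun t => ρ t * ⟪B t, μ • γ t + v⟫_ℝ := funext hab
      have hTYder : HasDerivAt (fun t => ⟪T t, μ • γ t + v⟫_ℝ)
          (deriv ρ s * ⟪B s, μ • γ s + v⟫_ℝ + ρ s * -(τ s * lam)) s := by
        rw [heq]; exact hmul
      have huniq := (ha s).unique hTYder
      rw [hτ s] at huniq
      linear_combination -huniq
    have hbfun : (fun t => ⟪B t, μ • γ t + v⟫_ℝ)
        = fun t => (lam * κ t * (1 + ρ t ^ 2) + μ) / deriv ρ t := by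
      funext t
      rw [eq_div_iff (hρ' t), mul_comm]
      exact key1 t
    have hK : ∀ s, -(τ s * lam) * deriv ρ s ^ 2 =
        (lam * deriv κ s * (1 + ρ s ^ 2) + lam * κ s * (2 * ρ s * deriv ρ s)) * deriv ρ s
          - (lam * κ s * (1 + ρ s ^ 2) + μ) * deriv (deriv ρ) s := by
      intro s
      have hu : HasDerivAt (fun t => lam * κ t * (1 + ρ t ^ 2) + μ)
          (lam * deriv κ s * (1 + ρ s ^ 2) + lam * κ s * (2 * ρ s * deriv ρ s)) s := by
        exact (((hκ1 s).const_mul lam).mul (hw s)).add_const μ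
      have hq := hu.div (h2 s) (hρ' s)
      have hbq : HasDerivAt (fun t => ⟪B t, μ • γ t + v⟫_ℝ)
          (((lam * deriv κ s * (1 + ρ s ^ 2) + lam * κ s * (2 * ρ s * deriv ρ s)) * deriv ρ s
            - (lam * κ s * (1 + ρ s ^ 2) + μ) * deriv (deriv ρ) s) / deriv ρ s ^ 2) s := by
        rw [hbfun]; exact hq
      have huniq := (hb s).unique hbq
      rw [eq_div_iff (pow_ne_zero 2 (hρ' s))] at huniq
      exact huniq
    refine ⟨-μ / lam, div_ne_zero (neg_ne_zero.mpr hμ) hlam, fun s => ?_⟩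
    rw [deriv_formula κ ρ hρd hκd hκpos s]
    have hnum : κ s * (1 + ρ s ^ 2) * deriv (deriv ρ) s
        - deriv κ s * (1 + ρ s ^ 2) * deriv ρ s - 3 * κ s * ρ s * deriv ρ s ^ 2
        = -μ / lam * deriv (deriv ρ) s := by
      have hK' := hK s
      rw [hτ s] at hK'
      rw [div_mul_eq_mul_div, eq_div_iff hlam]
      linear_combination hK'
    rw [hnum]
  · -- reverse direction
    rintro ⟨m, hm, hid⟩
    have G : ∀ s, κ s * (1 + ρ s ^ 2) * deriv (deriv ρ) s
        - deriv κ s * (1 + ρ s ^ 2) * deriv ρ s - 3 * κ s * ρ s * deriv ρ s ^ 2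
        = m * deriv (deriv ρ) s := by
      intro s
      have h := hid s
      rw [deriv_formula κ ρ hρd hκd hκpos s] at h
      exact mul_right_cancel₀ (hD s) ((div_eq_div_iff (hD s) (hD s)).mp h)
    set b : ℝ → ℝ := fun t => (κ t * (1 + ρ t ^ 2) - m) / deriv ρ t with hbdef
    have hbder : ∀ s, HasDerivAt b (-(ρ s * κ s)) s := by
      intro s
      have hu : HasDerivAt (fun t => κ t * (1 + ρ t ^ 2) - m)
          (deriv κ s * (1 + ρ s ^ 2) + κ s * (2 * ρ s * deriv ρ s)) s :=
        ((hκ1 s).mul (hw s)).sub_const m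
      have hq := hu.div (h2 s) (hρ' s)
      have hbq : HasDerivAt b
          (((deriv κ s * (1 + ρ s ^ 2) + κ s * (2 * ρ s * deriv ρ s)) * deriv ρ s
            - (κ s * (1 + ρ s ^ 2) - m) * deriv (deriv ρ) s) / deriv ρ s ^ 2) s := by
        rw [hbdef]; exact hq
      convert hbq using 1
      rw [eq_div_iff (pow_ne_zero 2 (hρ' s))]
      linear_combination G s
    have hbv : ∀ s, b s * deriv ρ s = κ s * (1 + ρ s ^ 2) - m := by
      intro s
      rw [hbdef]
      exact div_mul_cancel₀ _ (hρ' s)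
    have hader : ∀ s, HasDerivAt (fun t => ρ t * b t) (κ s + -m) s := by
      intro s
      have h := (h1 s).mul (hbder s)
      refine h.congr_deriv (Eq.symm ?_)
      linear_combination -hbv s
    have hYder : ∀ s, HasDerivAt (fun t => (ρ t * b t) • T t + (N t + b t • B t))
        ((-m) • T s) s := by
      intro s
      have h := ((hader s).smul (hTder s)).add ((hNder s).add ((hbder s).smul (hBder s)))
      refine h.congr_deriv (Eq.symm ?_)
      rw [hτ s]
      simp only [smul_smul, smul_add, add_smul, neg_smul, smul_neg]
      module
    have hgd : ∀ s, HasDerivAt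
        (fun t => ((ρ t * b t) • T t + (N t + b t • B t)) - (-m) • γ t) 0 s := by
      intro s
      have := (hYder s).sub ((hγT s).const_smul (-m))
      exact this.congr_deriv (by simp)
    have hconst : ∀ s, ((ρ s * b s) • T s + (N s + b s • B s)) - (-m) • γ s
        = ((ρ 0 * b 0) • T 0 + (N 0 + b 0 • B 0)) - (-m) • γ 0 := by
      intro s
      exact is_const_of_deriv_eq_zero (fun t => (hgd t).differentiableAt)
        (fun t => (hgd t).deriv) s 0
    refine ⟨1, -m, ((ρ 0 * b 0) • T 0 + (N 0 + b 0 • B 0)) - (-m) • γ 0,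
      one_ne_zero, neg_ne_zero.mpr hm, fun s => ?_⟩
    have hYs : (-m) • γ s + (((ρ 0 * b 0) • T 0 + (N 0 + b 0 • B 0)) - (-m) • γ 0)
        = (ρ s * b s) • T s + (N s + b s • B s) := by
      rw [← hconst s]; abel
    rw [hYs]
    simp only [inner_add_right, real_inner_smul_right]
    rw [real_inner_comm (T s) (N s), hTN s, hNN s, hNB s]
    ring

end
end

section
/- Let M ⊂ ℝ³ be a surface with unit normal N and suppose there is a concircular vector field Y(p) = μp + v whose restriction to M is everywhere parallel to N, i.e., Y|_M = λ·N for a smooth function λ with Y|_M not identically zero. Then λ is a nonzero constant and the shape operator satisfies A = −(μ/λ)·Id, so M is totally umbilical (an open piece of a plane or a sphere). -/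
open scoped InnerProductSpace

noncomputable section

/-- If a concircular vector field `Y(p) = μp + v` restricted to a surface
(given by an immersion `r` with unit normal `N`) is everywhere parallel to the
normal, `Y|_M = λ N`, with `Y|_M` not identically zero, then `λ` is a nonzero
constant and the shape operator is `-(μ/λ)·Id`, i.e. `D_X N = (μ/λ) X`
(so the surface is totally umbilical: an open piece of a plane or a sphere). -/
theorem concircular_parallel_to_normal_totally_umbilical
    (r : ℝ × ℝ → EuclideanSpace ℝ (Fin 3))
    (N : ℝ × ℝ → EuclideanSpace ℝ (Fin 3))
    (lam : ℝ × ℝ → ℝ) (μ : ℝ) (v : EuclideanSpace ℝ (Fin 3))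
    (hr : ContDiff ℝ (⊤ : ℕ∞) r) (hN : ContDiff ℝ (⊤ : ℕ∞) N) (hlam : ContDiff ℝ (⊤ : ℕ∞) lam)
    -- r is an immersion
    (himm : ∀ q, Function.Injective (fderiv ℝ r q))
    -- N is a unit normal field
    (hNunit : ∀ q, ‖N q‖ = 1)
    (hNnormal : ∀ q w, ⟪N q, fderiv ℝ r q w⟫_ℝ = 0)
    -- Y restricted to the surface is parallel to N
    (hpar : ∀ q, μ • r q + v = lam q • N q)
    -- Y|_M is not identically zero
    (hne : ∃ q, μ • r q + v ≠ 0) :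
    ∃ lam₀ : ℝ, lam₀ ≠ 0 ∧ (∀ q, lam q = lam₀) ∧
      ∀ q w, fderiv ℝ N q w = (μ / lam₀) • fderiv ℝ r q w := by
  have hrd : Differentiable ℝ r := hr.differentiable (by simp)
  have hNd : Differentiable ℝ N := hN.differentiable (by simp)
  have hld : Differentiable ℝ lam := hlam.differentiable (by simp)
  -- derivative of inner product of N with itself is zero
  have hNN : ∀ q w, ⟪N q, fderiv ℝ N q w⟫_ℝ = 0 := by
    intro q w
    have h1 : (fun q => ⟪N q, N q⟫_ℝ) = fun _ => (1 : ℝ) := by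
      funext q
      rw [real_inner_self_eq_norm_sq, hNunit]; norm_num
    have h2 : HasFDerivAt (fun q => ⟪N q, N q⟫_ℝ)
        ((fderivInnerCLM ℝ (N q, N q)).comp ((fderiv ℝ N q).prod (fderiv ℝ N q))) q :=
      (hNd q).hasFDerivAt.inner ℝ (hNd q).hasFDerivAt
    have h3 : HasFDerivAt (fun q => ⟪N q, N q⟫_ℝ) (0 : (ℝ × ℝ) →L[ℝ] ℝ) q := by
      rw [h1]; exact hasFDerivAt_const _ _
    have h4 := ContinuousLinearMap.ext_iff.mp (h2.unique h3) w
    simp only [ContinuousLinearMap.comp_apply, ContinuousLinearMap.prod_apply,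
      fderivInnerCLM_apply, ContinuousLinearMap.zero_apply] at h4
    linarith [real_inner_comm (N q) ((fderiv ℝ N q) w)]
  -- derivatives of both sides of hpar agree
  have key : ∀ q w, μ • fderiv ℝ r q w
      = lam q • fderiv ℝ N q w + (fderiv ℝ lam q w) • N q := by
    intro q w
    have hF : HasFDerivAt (fun q => μ • r q + v) (μ • fderiv ℝ r q) q :=
      ((hrd q).hasFDerivAt.const_smul μ).add_const v
    have hG : HasFDerivAt (fun q => lam q • N q)
        (lam q • fderiv ℝ N q + (fderiv ℝ lam q).smulRight (N q)) q :=
      (hld q).hasFDerivAt.smul (hNd q).hasFDerivAt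
    have heq : (fun q => μ • r q + v) = fun q => lam q • N q := funext hpar
    have h4 := ContinuousLinearMap.ext_iff.mp (hF.unique (heq ▸ hG)) w
    simpa using h4
  -- lam has zero derivative
  have hlam0 : ∀ q, fderiv ℝ lam q = 0 := by
    intro q
    refine ContinuousLinearMap.ext fun w => ?_
    have h := key q w
    have h2 := congrArg (fun x => ⟪N q, x⟫_ℝ) h
    simp only [inner_add_right, inner_smul_right, hNnormal, hNN,
      real_inner_self_eq_norm_sq, hNunit] at h2
    simpa using h2.symm
  -- lam is constant
  obtain ⟨q₀, hq₀⟩ := hne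
  refine ⟨lam q₀, ?_, ?_, ?_⟩
  · intro h
    apply hq₀
    rw [hpar q₀, h, zero_smul]
  · intro q
    exact is_const_of_fderiv_eq_zero hld hlam0 q q₀
  · intro q w
    have hc : lam q = lam q₀ := is_const_of_fderiv_eq_zero hld hlam0 q q₀
    have hl0 : lam q₀ ≠ 0 := by
      intro h
      apply hq₀
      rw [hpar q₀, h, zero_smul]
    have h := key q w
    rw [hlam0, hc] at h
    simp only [ContinuousLinearMap.zero_apply, zero_smul, add_zero] at h
    have h2 := congrArg (fun x => (lam q₀)⁻¹ • x) h.symm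
    simpa [smul_smul, inv_mul_cancel₀ hl0, div_eq_inv_mul] using h2
end
end

section
/- Let M ⊂ ℝ³ be a surface with unit normal N and Y(p) = μp + v a concircular vector field with ⟨Y, N⟩ = λ constant along M. Write Y|_M = δ·T + λ·N with T a unit tangent vector field and δ nowhere zero. Then the second fundamental form satisfies σ(X, T) = 0 for all tangent X (equivalently A T = 0, so M is flat with Gaussian curvature zero), and ∇_T T = 0, so the integral curves of T are straight lines in ℝ³. -/
open scoped InnerProductSpace

noncomputable section

private lemma aux_span_zero (f : (ℝ × ℝ) →L[ℝ] EuclideanSpace ℝ (Fin 3))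
    (n x : EuclideanSpace ℝ (Fin 3))
    (hinj : Function.Injective f) (hn : ‖n‖ = 1)
    (hperp : ∀ w, ⟪n, f w⟫_ℝ = 0)
    (hx1 : ∀ w, ⟪x, f w⟫_ℝ = 0) (hx2 : ⟪x, n⟫_ℝ = 0) : x = 0 := by
  set W : Submodule ℝ (EuclideanSpace ℝ (Fin 3)) :=
    LinearMap.range (f : (ℝ × ℝ) →ₗ[ℝ] EuclideanSpace ℝ (Fin 3)) with hWdef
  set V : Submodule ℝ (EuclideanSpace ℝ (Fin 3)) := ℝ ∙ n with hVdef
  have hn0 : n ≠ 0 := by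
    intro h; rw [h, norm_zero] at hn; norm_num at hn
  have hnn : ⟪n, n⟫_ℝ = 1 := by
    rw [real_inner_self_eq_norm_sq, hn]; norm_num
  have hWV : W ⊓ V = ⊥ := by
    rw [Submodule.eq_bot_iff]
    rintro y ⟨hyW, hyV⟩
    obtain ⟨w, hw⟩ := hyW
    obtain ⟨c, hc⟩ := Submodule.mem_span_singleton.1 hyV
    have h1 : ⟪n, y⟫_ℝ = 0 := by rw [← hw]; exact hperp w
    have h2 : ⟪n, y⟫_ℝ = c := by
      rw [← hc, real_inner_smul_right, hnn, mul_one]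
    have hc0 : c = 0 := by rw [← h2, h1]
    rw [← hc, hc0, zero_smul]
  have hfinW : Module.finrank ℝ W = 2 := by
    rw [hWdef, LinearMap.finrank_range_of_inj (f := (f : (ℝ × ℝ) →ₗ[ℝ] EuclideanSpace ℝ (Fin 3)))
      (by exact hinj)]
    simp [Module.finrank_prod]
  have hfinV : Module.finrank ℝ V = 1 := finrank_span_singleton hn0
  have hsup : Module.finrank ℝ (W ⊔ V : Submodule ℝ (EuclideanSpace ℝ (Fin 3))) = 3 := by
    have := Submodule.finrank_sup_add_finrank_inf_eq W V
    rw [hWV, hfinW, hfinV] at this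
    simpa using this
  have htop : (W ⊔ V : Submodule ℝ (EuclideanSpace ℝ (Fin 3))) = ⊤ := by
    apply Submodule.eq_top_of_finrank_eq
    rw [hsup, finrank_euclideanSpace_fin]
  have hx : x ∈ W ⊔ V := by rw [htop]; trivial
  obtain ⟨y, hyW, z, hzV, hyz⟩ := Submodule.mem_sup.1 hx
  obtain ⟨w, hw⟩ := hyW
  obtain ⟨c, hc⟩ := Submodule.mem_span_singleton.1 hzV
  have hw' : f w = y := hw
  have : ⟪x, x⟫_ℝ = 0 := by
    nth_rewrite 2 [← hyz]
    rw [inner_add_right, ← hw', hx1 w, ← hc, real_inner_smul_right, hx2]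
    ring
  exact inner_self_eq_zero.1 this

/-- For a proper concircular surface, writing `Y|_M = δ T + λ N` with `T` a unit
tangent field and `δ` nowhere zero, one has `σ(X,T) = 0` for every tangent `X`
(equivalently `A T = 0`, so the surface is flat), and the integral curves of `T`
are straight lines of ℝ³ (`∇_T T = 0` together with `σ(T,T) = 0` gives
`D_T T = 0`). Extrinsically: `⟨D_X N, T⟩ = 0` for all tangent `X`, and the
derivative of `T` in the direction `T` vanishes. -/
theorem proper_concircular_surface_flat_and_ruled
    (r T N : ℝ × ℝ → EuclideanSpace ℝ (Fin 3))
    (δ : ℝ × ℝ → ℝ) (lam μ : ℝ) (v : EuclideanSpace ℝ (Fin 3))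
    (hr : ContDiff ℝ (⊤ : ℕ∞) r) (hN : ContDiff ℝ (⊤ : ℕ∞) N) (hT : ContDiff ℝ (⊤ : ℕ∞) T)
    (hδ : ContDiff ℝ (⊤ : ℕ∞) δ)
    -- r is an immersion
    (himm : ∀ q, Function.Injective (fderiv ℝ r q))
    -- N is a unit normal field, T a unit tangent field
    (hNunit : ∀ q, ‖N q‖ = 1)
    (hNnormal : ∀ q w, ⟪N q, fderiv ℝ r q w⟫_ℝ = 0)
    (hTunit : ∀ q, ‖T q‖ = 1)
    (hTtang : ∀ q, T q ∈ Set.range (fderiv ℝ r q))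
    -- decomposition of the concircular field Y(p) = μ p + v along the surface
    (hdecomp : ∀ q, μ • r q + v = δ q • T q + lam • N q)
    (hδne : ∀ q, δ q ≠ 0)
    -- proper: λ ≠ 0 and μ ≠ 0
    (hlam : lam ≠ 0) (hμ : μ ≠ 0) :
    (∀ q w, ⟪fderiv ℝ N q w, T q⟫_ℝ = 0) ∧
      (∀ q w, fderiv ℝ r q w = T q → fderiv ℝ T q w = 0) := by
  have hrd : Differentiable ℝ r := hr.differentiable (by simp)
  have hNd : Differentiable ℝ N := hN.differentiable (by simp)
  have hTd : Differentiable ℝ T := hT.differentiable (by simp)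
  have hδd : Differentiable ℝ δ := hδ.differentiable (by simp)
  -- derivative of a unit field is orthogonal to the field
  have hunit_perp : ∀ (f : ℝ × ℝ → EuclideanSpace ℝ (Fin 3)), Differentiable ℝ f →
      (∀ q, ‖f q‖ = 1) → ∀ q w, ⟪fderiv ℝ f q w, f q⟫_ℝ = 0 := by
    intro f hfd hfu q w
    have hconst : (fun p => ⟪f p, f p⟫_ℝ) = fun _ => (1 : ℝ) := by
      funext p; rw [real_inner_self_eq_norm_sq, hfu p]; norm_num
    have h0 : fderiv ℝ (fun p => ⟪f p, f p⟫_ℝ) q w = 0 := by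
      rw [hconst]; simp
    have h1 := fderiv_inner_apply (𝕜 := ℝ) (hfd q) (hfd q) w
    rw [h0] at h1
    have h2 : ⟪f q, fderiv ℝ f q w⟫_ℝ = ⟪fderiv ℝ f q w, f q⟫_ℝ := real_inner_comm _ _
    rw [h2] at h1
    linarith
  have hNN : ∀ q w, ⟪fderiv ℝ N q w, N q⟫_ℝ = 0 := hunit_perp N hNd hNunit
  have hTT : ∀ q w, ⟪fderiv ℝ T q w, T q⟫_ℝ = 0 := hunit_perp T hTd hTunit
  have hNT0 : ∀ q, ⟪N q, T q⟫_ℝ = 0 := by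
    intro q
    obtain ⟨u, hu⟩ := hTtang q
    rw [← hu]; exact hNnormal q u
  -- derivative of the decomposition
  have hd : ∀ q w, μ • fderiv ℝ r q w =
      (fderiv ℝ δ q w) • T q + δ q • fderiv ℝ T q w + lam • fderiv ℝ N q w := by
    intro q w
    have h1 : HasFDerivAt (fun p => μ • r p + v) (μ • fderiv ℝ r q) q :=
      ((hrd q).hasFDerivAt.const_smul μ).add_const v
    have h2 : HasFDerivAt (fun p => δ p • T p + lam • N p)
        ((δ q • fderiv ℝ T q + (fderiv ℝ δ q).smulRight (T q)) + lam • fderiv ℝ N q) q :=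
      ((hδd q).hasFDerivAt.smul (hTd q).hasFDerivAt).add ((hNd q).hasFDerivAt.const_smul lam)
    have heq : (fun p => μ • r p + v) = fun p => δ p • T p + lam • N p := funext hdecomp
    rw [heq] at h1
    have h3 := h1.unique h2
    have h4 := congrArg (fun (L : (ℝ × ℝ) →L[ℝ] EuclideanSpace ℝ (Fin 3)) => L w) h3
    simp only [ContinuousLinearMap.add_apply, ContinuousLinearMap.smul_apply,
      ContinuousLinearMap.smulRight_apply] at h4
    rw [h4]; abel
  -- ⟪T' w, N⟫ = 0
  have hTN : ∀ q w, ⟪fderiv ℝ T q w, N q⟫_ℝ = 0 := by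
    intro q w
    have h := congrArg (fun z => ⟪z, N q⟫_ℝ) (hd q w)
    simp only [inner_add_left, real_inner_smul_left] at h
    rw [real_inner_comm (N q) (fderiv ℝ r q w), hNnormal q w,
      real_inner_comm (N q) (T q), hNT0 q, hNN q w] at h
    have h' : 0 = δ q * ⟪fderiv ℝ T q w, N q⟫_ℝ := by linarith
    have := (mul_eq_zero.1 h'.symm).resolve_left (hδne q)
    exact this
  -- first conclusion: ⟪N' w, T⟫ = 0
  have hNT : ∀ q w, ⟪fderiv ℝ N q w, T q⟫_ℝ = 0 := by
    intro q w
    have hconst : (fun p => ⟪N p, T p⟫_ℝ) = fun _ => (0 : ℝ) := funext hNT0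
    have h0 : fderiv ℝ (fun p => ⟪N p, T p⟫_ℝ) q w = 0 := by rw [hconst]; simp
    have h1 := fderiv_inner_apply (𝕜 := ℝ) (hNd q) (hTd q) w
    rw [h0] at h1
    rw [real_inner_comm (fderiv ℝ T q w) (N q)] at h1
    rw [hTN q w] at h1
    linarith
  refine ⟨hNT, ?_⟩
  -- symmetry of the second fundamental form
  have hrc1 : ContDiff ℝ 1 (fderiv ℝ r) := hr.fderiv_right (by exact WithTop.coe_le_coe.mpr (le_top : ((1 + 1 : ℕ∞)) ≤ ⊤))
  have hrdd : Differentiable ℝ (fderiv ℝ r) := hrc1.differentiable one_ne_zero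
  have happ : ∀ q w w', fderiv ℝ (fun p => fderiv ℝ r p w') q w
      = fderiv ℝ (fderiv ℝ r) q w w' := by
    intro q w w'
    have h := fderiv_clm_apply (hrdd q) (differentiableAt_const w')
    rw [show (fun p => fderiv ℝ r p w') = (fun p => (fderiv ℝ r p) ((fun _ => w') p)) from rfl, h]
    simp
  have hsymm2 : ∀ q, IsSymmSndFDerivAt ℝ r q := by
    intro q
    exact (hr.contDiffAt).isSymmSndFDerivAt ((by rw [minSmoothness_of_isRCLikeNormedField]; exact WithTop.coe_le_coe.mpr (le_top : ((2 : ℕ∞)) ≤ ⊤)))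
  have hsym : ∀ q w w', ⟪fderiv ℝ N q w, fderiv ℝ r q w'⟫_ℝ
      = ⟪fderiv ℝ N q w', fderiv ℝ r q w⟫_ℝ := by
    intro q w w'
    have key : ∀ a b, ⟪fderiv ℝ N q a, fderiv ℝ r q b⟫_ℝ
        = -⟪N q, fderiv ℝ (fderiv ℝ r) q a b⟫_ℝ := by
      intro a b
      have hgd : DifferentiableAt ℝ (fun p => fderiv ℝ r p b) q :=
        (hrdd q).clm_apply (differentiableAt_const b)
      have hconst : (fun p => ⟪N p, fderiv ℝ r p b⟫_ℝ) = fun _ => (0 : ℝ) :=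
        funext fun p => hNnormal p b
      have h0 : fderiv ℝ (fun p => ⟪N p, fderiv ℝ r p b⟫_ℝ) q a = 0 := by rw [hconst]; simp
      have h1 := fderiv_inner_apply (𝕜 := ℝ) (hNd q) hgd a
      rw [h0, happ q a b] at h1
      linarith
    rw [key w w', key w' w, hsymm2 q w w']
  -- second conclusion
  intro q w hw
  -- derivative of δ in direction w equals μ
  have hδμ : fderiv ℝ δ q w = μ := by
    have h := congrArg (fun z => ⟪z, T q⟫_ℝ) (hd q w)
    simp only [inner_add_left, real_inner_smul_left] at h
    have hT1 : ⟪T q, T q⟫_ℝ = 1 := by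
      rw [real_inner_self_eq_norm_sq, hTunit q]; norm_num
    rw [hw, hT1, hTT q w, hNT q w] at h
    have : μ * 1 = fderiv ℝ δ q w * 1 := by linarith
    linarith
  have h0 : δ q • fderiv ℝ T q w + lam • fderiv ℝ N q w = 0 := by
    have h := hd q w
    rw [hw, hδμ, add_assoc] at h
    exact (left_eq_add.mp h)
  have hTexpr : fderiv ℝ T q w = (δ q)⁻¹ • -(lam • fderiv ℝ N q w) := by
    have h1 : δ q • fderiv ℝ T q w = -(lam • fderiv ℝ N q w) :=
      eq_neg_of_add_eq_zero_left h0
    calc fderiv ℝ T q w = (δ q)⁻¹ • (δ q • fderiv ℝ T q w) := by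
          rw [smul_smul, inv_mul_cancel₀ (hδne q), one_smul]
      _ = (δ q)⁻¹ • -(lam • fderiv ℝ N q w) := by rw [h1]
  have hNr : ∀ w', ⟪fderiv ℝ N q w, fderiv ℝ r q w'⟫_ℝ = 0 := by
    intro w'
    rw [hsym q w w', hw]
    exact hNT q w'
  have hx1 : ∀ w', ⟪fderiv ℝ T q w, fderiv ℝ r q w'⟫_ℝ = 0 := by
    intro w'
    rw [hTexpr]
    rw [real_inner_smul_left, inner_neg_left, real_inner_smul_left, hNr w']
    ring
  exact aux_span_zero (fderiv ℝ r q) (N q) (fderiv ℝ T q w) (himm q) (hNunit q)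
    (hNnormal q) hx1 (hTN q w)
end
end

section
/- Let β(t) be a unit-speed curve on a plane or sphere S ⊂ ℝ³ of constant curvature c ≥ 0 with Darboux frame (T_β, N_β, η) satisfying T_β' = −√c·η + κ_β N_β, N_β' = −κ_β T_β, η' = √c·T_β. For a constant φ ∈ (0, π/2], the ruled surface X(t,z) = β(t) + z(cos φ·N_β(t) + sin φ·η(t)) has unit normal N(t,z) = −sin φ·N_β(t) + cos φ·η(t) (independent of z), and the concircular vector field Y (equal to the constant unit normal of S when c = 0, or Y(p) = √c(p − p₀) when S is a sphere of radius 1/√c centered at p₀) satisfies ⟨Y, N⟩ = cos φ at every point of the surface. -/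
open scoped InnerProductSpace

noncomputable section

/-- The ruled surface `X(t,z) = β(t) + z(cos φ N_β + sin φ η)` built on a curve
β of a totally umbilical surface of curvature `c ≥ 0` has unit normal
`N = -sin φ N_β + cos φ η` (independent of `z`), and the associated concircular
vector field `Y` satisfies `⟨Y, N⟩ = cos φ` at every point. -/
theorem ruled_surface_is_concircular
    (β Tβ Nβ η : ℝ → EuclideanSpace ℝ (Fin 3))
    (κβ : ℝ → ℝ) (c φ : ℝ) (p₀ : EuclideanSpace ℝ (Fin 3))
    (Y : EuclideanSpace ℝ (Fin 3) → EuclideanSpace ℝ (Fin 3))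
    (hc : 0 ≤ c) (hφ : φ ∈ Set.Ioc 0 (Real.pi / 2))
    -- orthonormal Darboux frame
    (hTunit : ∀ t, ‖Tβ t‖ = 1) (hNunit : ∀ t, ‖Nβ t‖ = 1) (hηunit : ∀ t, ‖η t‖ = 1)
    (hTN : ∀ t, ⟪Tβ t, Nβ t⟫_ℝ = 0) (hTη : ∀ t, ⟪Tβ t, η t⟫_ℝ = 0)
    (hNη : ∀ t, ⟪Nβ t, η t⟫_ℝ = 0)
    -- Frenet–Darboux equations
    (hβ' : ∀ t, deriv β t = Tβ t)
    (hT' : ∀ t, deriv Tβ t = -Real.sqrt c • η t + κβ t • Nβ t)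
    (hN' : ∀ t, deriv Nβ t = -κβ t • Tβ t)
    (hη' : ∀ t, deriv η t = Real.sqrt c • Tβ t)
    (hβd : Differentiable ℝ β) (hNd : Differentiable ℝ Nβ) (hηd : Differentiable ℝ η)
    -- the concircular vector field: constant normal of the plane when c = 0,
    -- the (scaled) position field centered at p₀ when c > 0
    (hY0 : c = 0 → ∀ p, Y p = η 0)
    (hY1 : 0 < c → (∀ t, η t = Real.sqrt c • (β t - p₀)) ∧
      ∀ p, Y p = Real.sqrt c • (p - p₀)) :
    ∀ t z,
      ‖-Real.sin φ • Nβ t + Real.cos φ • η t‖ = 1 ∧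
      ⟪-Real.sin φ • Nβ t + Real.cos φ • η t,
        deriv (fun t' => β t' + z • (Real.cos φ • Nβ t' + Real.sin φ • η t')) t⟫_ℝ = 0 ∧
      ⟪-Real.sin φ • Nβ t + Real.cos φ • η t,
        deriv (fun z' : ℝ => β t + z' • (Real.cos φ • Nβ t + Real.sin φ • η t)) z⟫_ℝ = 0 ∧
      ⟪Y (β t + z • (Real.cos φ • Nβ t + Real.sin φ • η t)),
        -Real.sin φ • Nβ t + Real.cos φ • η t⟫_ℝ = Real.cos φ := by
  intro t z
  have hNN : ⟪Nβ t, Nβ t⟫_ℝ = 1 := by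
    rw [real_inner_self_eq_norm_sq, hNunit t]; ring
  have hηη : ⟪η t, η t⟫_ℝ = 1 := by
    rw [real_inner_self_eq_norm_sq, hηunit t]; ring
  have hηN : ⟪η t, Nβ t⟫_ℝ = 0 := by rw [real_inner_comm]; exact hNη t
  have hNT : ⟪Nβ t, Tβ t⟫_ℝ = 0 := by rw [real_inner_comm]; exact hTN t
  have hηT : ⟪η t, Tβ t⟫_ℝ = 0 := by rw [real_inner_comm]; exact hTη t
  refine ⟨?_, ?_, ?_, ?_⟩
  · have h2 : ‖-Real.sin φ • Nβ t + Real.cos φ • η t‖ ^ 2 = 1 := by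
      rw [← real_inner_self_eq_norm_sq]
      simp only [inner_add_left, inner_add_right, inner_smul_left, inner_smul_right,
        RCLike.conj_to_real, hNN, hηη, hηN, hNη t]
      nlinarith [Real.sin_sq_add_cos_sq φ]
    nlinarith [norm_nonneg (-Real.sin φ • Nβ t + Real.cos φ • η t), h2,
      sq_nonneg (‖-Real.sin φ • Nβ t + Real.cos φ • η t‖ - 1)]
  · have hd : deriv (fun t' => β t' + z • (Real.cos φ • Nβ t' + Real.sin φ • η t')) t
        = Tβ t + z • (Real.cos φ • (-κβ t • Tβ t) + Real.sin φ • (Real.sqrt c • Tβ t)) := by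
      have hβh : HasDerivAt β (Tβ t) t := by
        simpa [hβ' t] using (hβd t).hasDerivAt
      have hNh : HasDerivAt Nβ (-κβ t • Tβ t) t := by
        simpa [hN' t] using (hNd t).hasDerivAt
      have hηh : HasDerivAt η (Real.sqrt c • Tβ t) t := by
        simpa [hη' t] using (hηd t).hasDerivAt
      exact (hβh.add (((hNh.const_smul (Real.cos φ)).add
        (hηh.const_smul (Real.sin φ))).const_smul z)).deriv
    rw [hd]
    simp only [inner_add_left, inner_add_right, inner_smul_left, inner_smul_right,
      RCLike.conj_to_real, hNT, hηT]
    ring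
  · have hd : deriv (fun z' : ℝ => β t + z' • (Real.cos φ • Nβ t + Real.sin φ • η t)) z
        = Real.cos φ • Nβ t + Real.sin φ • η t := by
      have : HasDerivAt (fun z' : ℝ => β t + z' • (Real.cos φ • Nβ t + Real.sin φ • η t))
          (Real.cos φ • Nβ t + Real.sin φ • η t) z := by
        have h := ((hasDerivAt_id z).smul_const
          (Real.cos φ • Nβ t + Real.sin φ • η t)).const_add (β t)
        rw [one_smul] at h
        exact h
      exact this.deriv
    rw [hd]
    simp only [inner_add_left, inner_add_right, inner_smul_left, inner_smul_right,
      RCLike.conj_to_real, hNN, hηη, hηN, hNη t]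
    ring
  · rcases hc.lt_or_eq with hcpos | hc0
    · obtain ⟨hηeq, hYeq⟩ := hY1 hcpos
      rw [hYeq]
      have : Real.sqrt c • (β t + z • (Real.cos φ • Nβ t + Real.sin φ • η t) - p₀)
          = η t + (z * Real.sqrt c) • (Real.cos φ • Nβ t + Real.sin φ • η t) := by
        rw [hηeq t]
        module
      rw [this]
      simp only [inner_add_left, inner_add_right, inner_smul_left, inner_smul_right,
        RCLike.conj_to_real, hNN, hηη, hηN, hNη t]
      ring
    · have hYeq := hY0 hc0.symm
      have hηc : η 0 = η t := by
        have : ∀ x, deriv η x = 0 := by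
          intro x; rw [hη' x, ← hc0, Real.sqrt_zero, zero_smul]
        exact is_const_of_deriv_eq_zero hηd this 0 t
      rw [hYeq, hηc]
      simp only [inner_add_right, inner_smul_right, hηη, hηN]
      ring
end
end

section
/- Let δ : I → ℝ³ be a unit-speed curve lying on the sphere of radius r centered at the origin, with Darboux frame (T_δ, N_δ, (1/r)δ). Then the normal surface M parametrized by X(u,z) = δ(u) + z·N_δ(u) has unit normal N(u,z) = (1/r)δ(u) wherever it is regular, and hence ⟨N(u,z), X(u,z)⟩ = r at every point; i.e., M is a concircular surface with axis the position vector field. -/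
/-!
Differentiating `‖δ‖² = r²` gives `δ ⊥ T_δ`, and differentiating `⟪N_δ, δ⟫ = 0` gives
`⟪N_δ', δ⟫ = -⟪N_δ, T_δ⟫ = 0`. Hence `δ(u)` is orthogonal to both partial derivatives
`X_u = T_δ + z N_δ'` and `X_z = N_δ`, while `⟪δ, X⟫ = ‖δ‖² = r²`.
-/

open scoped InnerProductSpace

section

variable {E : Type*} [NormedAddCommGroup E] [InnerProductSpace ℝ E]

theorem inner_add_inner_eq_zero_of_inner_const {f g : ℝ → E} {f' g' : E} {u c : ℝ}
    (hf : HasDerivAt f f' u) (hg : HasDerivAt g g' u) (hc : ∀ v, ⟪f v, g v⟫_ℝ = c) :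
    ⟪f u, g'⟫_ℝ + ⟪f', g u⟫_ℝ = 0 := by
  have h := hf.inner ℝ hg
  rw [show (fun v => ⟪f v, g v⟫_ℝ) = fun _ => c from funext hc] at h
  exact h.unique (hasDerivAt_const u c)

theorem inner_eq_zero_of_hasDerivAt_of_norm_const {f : ℝ → E} {f' : E} {u c : ℝ}
    (hf : HasDerivAt f f' u) (hc : ∀ v, ‖f v‖ = c) : ⟪f u, f'⟫_ℝ = 0 := by
  have h := inner_add_inner_eq_zero_of_inner_const hf hf (c := c ^ 2) fun v => by
    rw [real_inner_self_eq_norm_sq, hc v]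
  rw [real_inner_comm (f u)] at h
  linarith

theorem inner_deriv_eq_zero_of_inner_eq_zero {δ N : ℝ → E} {T : E} {u : ℝ}
    (hδ : HasDerivAt δ T u) (hN : DifferentiableAt ℝ N u) (hNδ : ∀ v, ⟪N v, δ v⟫_ℝ = 0)
    (hTN : ⟪T, N u⟫_ℝ = 0) : ⟪δ u, deriv N u⟫_ℝ = 0 := by
  have h := inner_add_inner_eq_zero_of_inner_const hN.hasDerivAt hδ hNδ
  rw [real_inner_comm, hTN, real_inner_comm] at h
  linarith

end

theorem normal_surface_of_spherical_curve_is_concircular_general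
    (δ Tδ Nδ : ℝ → EuclideanSpace ℝ (Fin 3)) (r : ℝ) (hr : 0 < r)
    -- δ is a unit-speed curve on the sphere of radius r centered at the origin
    (hsph : ∀ u, ‖δ u‖ = r)
    (hδ' : ∀ u, deriv δ u = Tδ u)
    (hTN : ∀ u, ⟪Tδ u, Nδ u⟫_ℝ = 0)
    (hNδsph : ∀ u, ⟪Nδ u, δ u⟫_ℝ = 0)
    (hδd : Differentiable ℝ δ) (hNd : Differentiable ℝ Nδ) :
    ∀ u z,
      ‖(1 / r) • δ u‖ = 1 ∧
      ⟪(1 / r) • δ u, deriv (fun u' => δ u' + z • Nδ u') u⟫_ℝ = 0 ∧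
      ⟪(1 / r) • δ u, deriv (fun z' : ℝ => δ u + z' • Nδ u) z⟫_ℝ = 0 ∧
      ⟪(1 / r) • δ u, δ u + z • Nδ u⟫_ℝ = r := by
  intro u z
  have hδT : HasDerivAt δ (Tδ u) u := hδ' u ▸ (hδd u).hasDerivAt
  have hδ_perp_T : ⟪δ u, Tδ u⟫_ℝ = 0 := inner_eq_zero_of_hasDerivAt_of_norm_const hδT hsph
  have hδ_perp_N' : ⟪δ u, deriv Nδ u⟫_ℝ = 0 :=
    inner_deriv_eq_zero_of_inner_eq_zero hδT (hNd u) hNδsph (hTN u)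
  have hXu : deriv (fun u' => δ u' + z • Nδ u') u = Tδ u + z • deriv Nδ u :=
    (hδT.add ((hNd u).hasDerivAt.const_smul z)).deriv
  have hXz : deriv (fun z' : ℝ => δ u + z' • Nδ u) z = Nδ u := by
    simpa using (((hasDerivAt_id z).smul_const (Nδ u)).const_add (δ u)).deriv
  refine ⟨?_, ?_, ?_, ?_⟩
  · rw [norm_smul, hsph u, Real.norm_eq_abs, abs_of_pos (one_div_pos.2 hr), one_div,
      inv_mul_cancel₀ hr.ne']
  · rw [hXu, real_inner_smul_left, inner_add_right, real_inner_smul_right, hδ_perp_T,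
      hδ_perp_N']
    ring
  · rw [hXz, real_inner_smul_left, real_inner_comm, hNδsph u, mul_zero]
  · rw [real_inner_smul_left, inner_add_right, real_inner_smul_right,
      real_inner_self_eq_norm_sq, hsph u, real_inner_comm, hNδsph u]
    field_simp
    ring

/-- The normal surface `X(u,z) = δ(u) + z N_δ(u)` to a spherical curve δ on the
sphere of radius `r` centered at the origin has unit normal `(1/r) δ(u)`
(wherever it is regular), and `⟨N, X⟩ = r` everywhere: it is a concircular
surface with axis the position vector field. -/
theorem normal_surface_of_spherical_curve_is_concircular
    (δ Tδ Nδ : ℝ → EuclideanSpace ℝ (Fin 3)) (r : ℝ) (hr : 0 < r)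
    -- δ is a unit-speed curve on the sphere of radius r centered at the origin
    (hsph : ∀ u, ‖δ u‖ = r)
    (hδ' : ∀ u, deriv δ u = Tδ u)
    (hTunit : ∀ u, ‖Tδ u‖ = 1) (hNunit : ∀ u, ‖Nδ u‖ = 1)
    (hTN : ∀ u, ⟪Tδ u, Nδ u⟫_ℝ = 0)
    (hNδsph : ∀ u, ⟪Nδ u, δ u⟫_ℝ = 0)
    (hδd : Differentiable ℝ δ) (hNd : Differentiable ℝ Nδ) :
    ∀ u z,
      ‖(1 / r) • δ u‖ = 1 ∧
      ⟪(1 / r) • δ u, deriv (fun u' => δ u' + z • Nδ u') u⟫_ℝ = 0 ∧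
      ⟪(1 / r) • δ u, deriv (fun z' : ℝ => δ u + z' • Nδ u) z⟫_ℝ = 0 ∧
      ⟪(1 / r) • δ u, δ u + z • Nδ u⟫_ℝ = r :=
  normal_surface_of_spherical_curve_is_concircular_general δ Tδ Nδ r hr hsph hδ' hTN hNδsph hδd hNd
end

section
/- For a > 0, c ∈ {0,1}, φ ∈ (0, π/2), the functions θ(s) = as, t(s) = −(2/a)cos(as), z(s) = (1/a)sin(as), defined on s ∈ (0, π/a), satisfy the geodesic system t'(s)(1 + z(s)(−cos φ·κ_β(t(s)) + √c·sin φ)) = sin θ(s), z'(s) = cos θ(s), θ'(s) = t'(s)(cos φ·κ_β(t(s)) − √c·sin φ), where κ_β(t) = a/(cos φ·√(4 − a²t²)) + √c·tan φ for t ∈ (−2/a, 2/a). -/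
noncomputable section

/-- The functions `θ(s) = as`, `t(s) = -(2/a)cos(as)`, `z(s) = (1/a)sin(as)`
solve the geodesic ODE system of the concircular surface built on a curve with
curvature `κ_β(t) = a/(cos φ √(4 - a²t²)) + √c tan φ`. -/
theorem constant_precession_geodesic_system
    (a c φ : ℝ) (ha : 0 < a) (hc : c = 0 ∨ c = 1)
    (hφ : φ ∈ Set.Ioo 0 (Real.pi / 2))
    (κβ θ t z : ℝ → ℝ)
    (hκβ : ∀ x ∈ Set.Ioo (-(2 / a)) (2 / a),
      κβ x = a / (Real.cos φ * Real.sqrt (4 - a ^ 2 * x ^ 2)) + Real.sqrt c * Real.tan φ)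
    (hθ : ∀ s, θ s = a * s)
    (ht : ∀ s, t s = -(2 / a) * Real.cos (a * s))
    (hz : ∀ s, z s = (1 / a) * Real.sin (a * s)) :
    ∀ s ∈ Set.Ioo 0 (Real.pi / a),
      deriv t s * (1 + z s * (-Real.cos φ * κβ (t s) + Real.sqrt c * Real.sin φ))
          = Real.sin (θ s) ∧
      deriv z s = Real.cos (θ s) ∧
      deriv θ s = deriv t s * (Real.cos φ * κβ (t s) - Real.sqrt c * Real.sin φ) := by
  intro s hs
  obtain ⟨hs0, hsπ⟩ := hs
  obtain ⟨hφ0, hφπ⟩ := hφ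
  have hcosφ : 0 < Real.cos φ := Real.cos_pos_of_mem_Ioo ⟨by linarith [Real.pi_pos], hφπ⟩
  have has : a * s ∈ Set.Ioo 0 Real.pi := by
    constructor
    · positivity
    · calc a * s < a * (Real.pi / a) := by exact mul_lt_mul_of_pos_left hsπ ha
        _ = Real.pi := by field_simp
  have hsin : 0 < Real.sin (a * s) := Real.sin_pos_of_pos_of_lt_pi has.1 has.2
  have hpy := Real.sin_sq_add_cos_sq (a * s)
  have hcos1 : Real.cos (a * s) < 1 := by nlinarith
  have hcosn1 : -1 < Real.cos (a * s) := by nlinarith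
  -- t s is in the domain
  have htmem : t s ∈ Set.Ioo (-(2 / a)) (2 / a) := by
    rw [ht s]
    constructor
    · rw [neg_lt, neg_mul, neg_neg]
      have h2a : 0 < 2 / a := by positivity
      calc (2 / a) * Real.cos (a * s) < (2 / a) * 1 := by
            exact mul_lt_mul_of_pos_left hcos1 h2a
        _ = 2 / a := mul_one _
    · have h2a : 0 < 2 / a := by positivity
      have : -(2 / a) * Real.cos (a * s) < -(2/a) * (-1) := by
        rw [neg_mul, neg_mul, neg_lt_neg_iff]
        exact mul_lt_mul_of_pos_left hcosn1 h2a
      simpa using this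
  -- compute sqrt(4 - a² t²) = 2 sin(a s)
  have hsqrt : Real.sqrt (4 - a ^ 2 * (t s) ^ 2) = 2 * Real.sin (a * s) := by
    rw [ht s]
    have h1 : 4 - a ^ 2 * (-(2 / a) * Real.cos (a * s)) ^ 2
        = (2 * Real.sin (a * s)) ^ 2 := by
      have hpy := Real.sin_sq_add_cos_sq (a * s)
      field_simp
      nlinarith
    rw [h1, Real.sqrt_sq (by positivity)]
  have hκ : κβ (t s) = a / (Real.cos φ * (2 * Real.sin (a * s)))
      + Real.sqrt c * Real.tan φ := by
    rw [hκβ (t s) htmem, hsqrt]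
  -- derivatives
  have htf : t = fun s => -(2 / a) * Real.cos (a * s) := funext ht
  have hzf : z = fun s => (1 / a) * Real.sin (a * s) := funext hz
  have hθf : θ = fun s => a * s := funext hθ
  have hdt : deriv t s = 2 * Real.sin (a * s) := by
    rw [htf]
    have : HasDerivAt (fun s : ℝ => -(2 / a) * Real.cos (a * s))
        (-(2 / a) * (-Real.sin (a * s) * a)) s := by
      have h1 : HasDerivAt (fun s : ℝ => a * s) a s := by
        simpa using (hasDerivAt_id s).const_mul a
      exact ((Real.hasDerivAt_cos (a * s)).comp s h1).const_mul _
    rw [this.deriv]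
    field_simp
  have hdz : deriv z s = Real.cos (a * s) := by
    rw [hzf]
    have : HasDerivAt (fun s : ℝ => (1 / a) * Real.sin (a * s))
        ((1 / a) * (Real.cos (a * s) * a)) s := by
      have h1 : HasDerivAt (fun s : ℝ => a * s) a s := by
        simpa using (hasDerivAt_id s).const_mul a
      exact ((Real.hasDerivAt_sin (a * s)).comp s h1).const_mul _
    rw [this.deriv]
    field_simp
  have hdθ : deriv θ s = a := by
    rw [hθf]
    have : HasDerivAt (fun s : ℝ => a * s) a s := by
      simpa using (hasDerivAt_id s).const_mul a
    exact this.deriv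
  -- the key combination
  have htan : Real.cos φ * Real.tan φ = Real.sin φ := by
    rw [Real.tan_eq_sin_div_cos]
    field_simp
  have hkey : Real.cos φ * κβ (t s) - Real.sqrt c * Real.sin φ
      = a / (2 * Real.sin (a * s)) := by
    rw [hκ]
    have hne : Real.cos φ * (2 * Real.sin (a * s)) ≠ 0 := by positivity
    field_simp
    linear_combination (2 * Real.sin (a * s) * Real.sqrt c) * htan
  refine ⟨?_, ?_, ?_⟩
  · rw [hdt, hz s, hθ s]
    have h1 : -Real.cos φ * κβ (t s) + Real.sqrt c * Real.sin φ
        = -(a / (2 * Real.sin (a * s))) := by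
      rw [← hkey]; ring
    rw [h1]
    field_simp
    ring
  · rw [hdz, hθ s]
  · rw [hdθ, hdt, hkey]
    field_simp
end
end

section
/- With the setup of the previous system (θ(s)=as, t(s)=−(2/a)cos(as), z(s)=(1/a)sin(as), and κ_β(t) = a/(cos φ·√(4−a²t²)) + √c·tan φ), the curvature and torsion given by κ_γ(s) = −sin θ(s)·t'(s)·(sin φ·κ_β(t(s)) + √c·cos φ) and τ_γ(s) = cos θ(s)·t'(s)·(sin φ·κ_β(t(s)) + √c·cos φ) evaluate to κ_γ(s) = −sin(as)(a·tan φ + 2√c·sec φ·sin(as)) and τ_γ(s) = cos(as)(a·tan φ + 2√c·sec φ·sin(as)). -/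
noncomputable section

/-- Curvature and torsion of the 'constant precession' concircular helices:
with `θ(s) = as`, `t(s) = -(2/a)cos(as)`, `z(s) = (1/a)sin(as)` and
`κ_β(t) = a/(cos φ √(4 - a²t²)) + √c tan φ`, the formulas
`κ_γ = -sin θ · t' · (sin φ κ_β(t) + √c cos φ)` and
`τ_γ = cos θ · t' · (sin φ κ_β(t) + √c cos φ)` evaluate to
`κ_γ(s) = -sin(as)(a tan φ + 2√c sec φ sin(as))` and
`τ_γ(s) = cos(as)(a tan φ + 2√c sec φ sin(as))`. -/
theorem constant_precession_curvature_torsion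
    (a c φ : ℝ) (ha : 0 < a) (hc : c = 0 ∨ c = 1)
    (hφ : φ ∈ Set.Ioo 0 (Real.pi / 2))
    (κβ θ t z κγ τγ : ℝ → ℝ)
    (hκβ : ∀ x ∈ Set.Ioo (-(2 / a)) (2 / a),
      κβ x = a / (Real.cos φ * Real.sqrt (4 - a ^ 2 * x ^ 2)) + Real.sqrt c * Real.tan φ)
    (hθ : ∀ s, θ s = a * s)
    (ht : ∀ s, t s = -(2 / a) * Real.cos (a * s))
    (hz : ∀ s, z s = (1 / a) * Real.sin (a * s))
    (hκγ : ∀ s, κγ s =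
      -Real.sin (θ s) * deriv t s * (Real.sin φ * κβ (t s) + Real.sqrt c * Real.cos φ))
    (hτγ : ∀ s, τγ s =
      Real.cos (θ s) * deriv t s * (Real.sin φ * κβ (t s) + Real.sqrt c * Real.cos φ)) :
    ∀ s ∈ Set.Ioo 0 (Real.pi / a),
      κγ s = -Real.sin (a * s) *
          (a * Real.tan φ + 2 * Real.sqrt c * (1 / Real.cos φ) * Real.sin (a * s)) ∧
      τγ s = Real.cos (a * s) *
          (a * Real.tan φ + 2 * Real.sqrt c * (1 / Real.cos φ) * Real.sin (a * s)) := by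
  intro s hs
  have has : a * s ∈ Set.Ioo 0 Real.pi := by
    constructor
    · exact mul_pos ha hs.1
    · have := hs.2
      calc a * s < a * (Real.pi / a) := by exact mul_lt_mul_of_pos_left this ha
        _ = Real.pi := by field_simp
  have hsin : 0 < Real.sin (a * s) := Real.sin_pos_of_pos_of_lt_pi has.1 has.2
  have hcosφ : 0 < Real.cos φ := Real.cos_pos_of_mem_Ioo ⟨by linarith [hφ.1, Real.pi_pos], hφ.2⟩
  -- deriv t s
  have htfun : t = fun s => -(2 / a) * Real.cos (a * s) := funext ht
  have hderiv : deriv t s = 2 * Real.sin (a * s) := by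
    rw [htfun]
    have h1 : HasDerivAt (fun s : ℝ => -(2 / a) * Real.cos (a * s))
        (-(2 / a) * (-Real.sin (a * s) * a)) s := by
      have := (Real.hasDerivAt_cos (a * s)).comp s ((hasDerivAt_id s).const_mul a)
      simpa using this.const_mul (-(2 / a))
    rw [h1.deriv]
    field_simp
  -- t s in interval
  have hcoslt : Real.cos (a * s) < 1 := by
    rcases lt_or_eq_of_le (Real.cos_le_one (a * s)) with h | h
    · exact h
    · exfalso
      have := Real.sin_sq_add_cos_sq (a * s)
      nlinarith
  have hcosgt : -1 < Real.cos (a * s) := by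
    rcases lt_or_eq_of_le (Real.neg_one_le_cos (a * s)) with h | h
    · exact h
    · exfalso
      have := Real.sin_sq_add_cos_sq (a * s)
      nlinarith
  have hts : t s ∈ Set.Ioo (-(2 / a)) (2 / a) := by
    rw [ht]
    have h2a : 0 < 2 / a := by positivity
    constructor
    · nlinarith
    · nlinarith
  -- sqrt computation
  have hsqrt : Real.sqrt (4 - a ^ 2 * (t s) ^ 2) = 2 * Real.sin (a * s) := by
    have : 4 - a ^ 2 * (t s) ^ 2 = (2 * Real.sin (a * s)) ^ 2 := by
      rw [ht]
      have hsc := Real.sin_sq_add_cos_sq (a * s)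
      field_simp
      nlinarith
    rw [this, Real.sqrt_sq (by positivity)]
  have hκb := hκβ (t s) hts
  rw [hsqrt] at hκb
  have key : deriv t s * (Real.sin φ * κβ (t s) + Real.sqrt c * Real.cos φ)
      = a * Real.tan φ + 2 * Real.sqrt c * (1 / Real.cos φ) * Real.sin (a * s) := by
    rw [hderiv, hκb, Real.tan_eq_sin_div_cos]
    have hsc := Real.sin_sq_add_cos_sq φ
    field_simp
    linear_combination (2 * Real.sin (a*s) * Real.sqrt c) * hsc
  refine ⟨?_, ?_⟩
  · rw [hκγ, hθ, mul_assoc, key]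
  · rw [hτγ, hθ, mul_assoc, key]
end
end

section
/- Let γ be a unit-speed proper concircular helix in ℝ³ with κ_γ > 0, ρ = τ_γ/κ_γ, ρ' ≠ 0, satisfying (ρ'/(κ_γ(1+ρ²)^{3/2}))' = m·ρ''/(κ_γ²(1+ρ²)^{5/2}) with m ≠ 0, and assume ρ'' ≠ 0. Define ω(s) = −arccot ρ(s) and u(s) = −(1/m)(κ_γ(s)(1+ρ(s)²)^{3/2}/ρ'(s) + n) for a constant n. Then u'(s) = √(1+ρ(s)²)·ρ''(s)/ρ'(s)², and defining v(s) = u(s) − sin ω(s)/ω'(s) one has v'(s) = cos ω(s) = ρ(s)/√(1+ρ(s)²). -/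
noncomputable section

/-- Auxiliary computations in the proof that proper concircular helices are
geodesics of tangent surfaces of rectifying curves. Here
`ω(s) = -arccot ρ(s)` (written as `arctan ρ(s) - π/2`),
`u(s) = -(1/m)(κ(1+ρ²)^{3/2}/ρ' + n)` and `v = u - sin ω / ω'`. Then
`u' = √(1+ρ²) ρ''/ρ'²` and `v' = cos ω = ρ/√(1+ρ²)`. -/
theorem concircular_helix_reparametrization
    (κ ρ u v ω : ℝ → ℝ) (m n : ℝ) (hm : m ≠ 0)
    (hκ : ContDiff ℝ (⊤ : ℕ∞) κ) (hρ : ContDiff ℝ (⊤ : ℕ∞) ρ)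
    (hκpos : ∀ s, 0 < κ s)
    (hρ' : ∀ s, deriv ρ s ≠ 0) (hρ'' : ∀ s, deriv (deriv ρ) s ≠ 0)
    -- the natural equation (conc4) of proper concircular helices
    (hconc4 : ∀ s,
      deriv (fun t => deriv ρ t / (κ t * (1 + ρ t ^ 2) ^ ((3 : ℝ) / 2))) s =
        m * deriv (deriv ρ) s / (κ s ^ 2 * (1 + ρ s ^ 2) ^ ((5 : ℝ) / 2)))
    (hω : ∀ s, ω s = Real.arctan (ρ s) - Real.pi / 2)
    (hu : ∀ s, u s =
      -(1 / m) * (κ s * (1 + ρ s ^ 2) ^ ((3 : ℝ) / 2) / deriv ρ s + n))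
    (hv : ∀ s, v s = u s - Real.sin (ω s) / deriv ω s) :
    ∀ s,
      deriv u s = Real.sqrt (1 + ρ s ^ 2) * deriv (deriv ρ) s / (deriv ρ s) ^ 2 ∧
      deriv v s = Real.cos (ω s) ∧
      Real.cos (ω s) = ρ s / Real.sqrt (1 + ρ s ^ 2) := by
  have hρd : Differentiable ℝ ρ := hρ.differentiable (by simp)
  have hρ'd : Differentiable ℝ (deriv ρ) :=
    (contDiff_infty_iff_deriv.mp (hρ.of_le (by simp))).2.differentiable (by simp)
  have hκd : Differentiable ℝ κ := hκ.differentiable (by simp)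
  have hXpos : ∀ t, (0:ℝ) < 1 + ρ t ^ 2 := fun t => by positivity
  have haeq : ∀ t, Real.sqrt (1 + ρ t ^ 2) ^ 2 = 1 + ρ t ^ 2 :=
    fun t => Real.sq_sqrt (hXpos t).le
  have hane : ∀ t, Real.sqrt (1 + ρ t ^ 2) ≠ 0 :=
    fun t => ne_of_gt (Real.sqrt_pos.mpr (hXpos t))
  have h3 : ∀ t, (1 + ρ t ^ 2) ^ ((3:ℝ)/2) = Real.sqrt (1 + ρ t ^ 2) ^ 3 := by
    intro t
    rw [Real.sqrt_eq_rpow, ← Real.rpow_natCast ((1 + ρ t ^ 2) ^ ((1:ℝ)/2)) 3,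
      ← Real.rpow_mul (hXpos t).le]
    norm_num
  have h5 : ∀ t, (1 + ρ t ^ 2) ^ ((5:ℝ)/2) = Real.sqrt (1 + ρ t ^ 2) ^ 5 := by
    intro t
    rw [Real.sqrt_eq_rpow, ← Real.rpow_natCast ((1 + ρ t ^ 2) ^ ((1:ℝ)/2)) 5,
      ← Real.rpow_mul (hXpos t).le]
    norm_num
  -- derivative of the auxiliary function A
  set A : ℝ → ℝ := fun t => deriv ρ t / (κ t * (1 + ρ t ^ 2) ^ ((3 : ℝ) / 2)) with hA_def
  have hDne : ∀ t, κ t * (1 + ρ t ^ 2) ^ ((3 : ℝ) / 2) ≠ 0 := by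
    intro t
    have h : (0:ℝ) < (1 + ρ t ^ 2) ^ ((3 : ℝ) / 2) := Real.rpow_pos_of_pos (hXpos t) _
    exact mul_ne_zero (hκpos t).ne' h.ne'
  have hXder : ∀ t, HasDerivAt (fun t => 1 + ρ t ^ 2) (2 * ρ t * deriv ρ t) t := by
    intro t
    have := ((hρd t).hasDerivAt.pow 2).const_add (1:ℝ)
    simpa [mul_comm, mul_assoc, mul_left_comm] using this
  have hPder : ∀ t, HasDerivAt (fun t => (1 + ρ t ^ 2) ^ ((3 : ℝ) / 2))
      (2 * ρ t * deriv ρ t * ((3:ℝ)/2) * (1 + ρ t ^ 2) ^ ((3:ℝ)/2 - 1)) t :=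
    fun t => (hXder t).rpow_const (Or.inl (ne_of_gt (hXpos t)))
  have hAdd : ∀ t, DifferentiableAt ℝ A t := by
    intro t
    exact ((hρ'd t).hasDerivAt.div ((hκd t).hasDerivAt.mul (hPder t)) (hDne t)).differentiableAt
  have hA : ∀ t, HasDerivAt A
      (m * deriv (deriv ρ) t / (κ t ^ 2 * (1 + ρ t ^ 2) ^ ((5 : ℝ) / 2))) t := by
    intro t
    have := (hAdd t).hasDerivAt
    rwa [hconc4 t] at this
  have hAne : ∀ t, A t ≠ 0 := fun t => div_ne_zero (hρ' t) (hDne t)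
  have hu_fun : u = fun t => -(1 / m) * ((A t)⁻¹ + n) := by
    funext t
    rw [hu t, hA_def]
    simp [inv_div]
  have hu' : ∀ t, HasDerivAt u
      (-(1 / m) * (-(m * deriv (deriv ρ) t / (κ t ^ 2 * (1 + ρ t ^ 2) ^ ((5 : ℝ) / 2)))
        / (A t) ^ 2)) t := by
    intro t
    rw [hu_fun]
    exact (((hA t).inv (hAne t)).add_const n).const_mul _
  have goal1 : ∀ t, deriv u t =
      Real.sqrt (1 + ρ t ^ 2) * deriv (deriv ρ) t / (deriv ρ t) ^ 2 := by
    intro t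
    rw [(hu' t).deriv, hA_def]
    simp only [h3, h5]
    have hk := (hκpos t).ne'
    have hr' := hρ' t
    have ha := hane t
    field_simp
  -- ω facts
  have hω_fun : ω = fun t => Real.arctan (ρ t) - Real.pi / 2 := funext hω
  have hωder : ∀ t, HasDerivAt ω (1 / (1 + ρ t ^ 2) * deriv ρ t) t := by
    intro t
    rw [hω_fun]
    exact ((Real.hasDerivAt_arctan (ρ t)).comp t (hρd t).hasDerivAt).sub_const _
  have hsin : ∀ t, Real.sin (ω t) = -(1 / Real.sqrt (1 + ρ t ^ 2)) := by
    intro t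
    rw [hω t, Real.sin_sub]
    simp [Real.cos_arctan]
  have goal3 : ∀ t, Real.cos (ω t) = ρ t / Real.sqrt (1 + ρ t ^ 2) := by
    intro t
    rw [hω t, Real.cos_sub]
    simp [Real.sin_arctan]
  -- v
  have hv_fun : v = fun t => u t + Real.sqrt (1 + ρ t ^ 2) / deriv ρ t := by
    funext t
    rw [hv t, hsin t, (hωder t).deriv]
    have ha := hane t
    have hr' := hρ' t
    have hX := (hXpos t).ne'
    field_simp
    linear_combination (-1) * haeq t
  have hsqrtder : ∀ t, HasDerivAt (fun t => Real.sqrt (1 + ρ t ^ 2))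
      (1 / (2 * Real.sqrt (1 + ρ t ^ 2)) * (2 * ρ t * deriv ρ t)) t := by
    intro t
    exact (Real.hasDerivAt_sqrt (hXpos t).ne').comp t (hXder t)
  have hv' : ∀ t, HasDerivAt v
      (Real.sqrt (1 + ρ t ^ 2) * deriv (deriv ρ) t / (deriv ρ t) ^ 2 +
        ((1 / (2 * Real.sqrt (1 + ρ t ^ 2)) * (2 * ρ t * deriv ρ t)) * deriv ρ t -
          Real.sqrt (1 + ρ t ^ 2) * deriv (deriv ρ) t) / (deriv ρ t) ^ 2) t := by
    intro t
    have hu2 : HasDerivAt u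
        (Real.sqrt (1 + ρ t ^ 2) * deriv (deriv ρ) t / (deriv ρ t) ^ 2) t := by
      rw [← goal1 t]; exact (hu' t).differentiableAt.hasDerivAt
    have hg : HasDerivAt (fun t => Real.sqrt (1 + ρ t ^ 2) / deriv ρ t)
        (((1 / (2 * Real.sqrt (1 + ρ t ^ 2)) * (2 * ρ t * deriv ρ t)) * deriv ρ t -
          Real.sqrt (1 + ρ t ^ 2) * deriv (deriv ρ) t) / (deriv ρ t) ^ 2) t :=
      (hsqrtder t).div (hρ'd t).hasDerivAt (hρ' t)
    rw [hv_fun]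
    exact hu2.add hg
  intro s
  refine ⟨goal1 s, ?_, goal3 s⟩
  rw [(hv' s).deriv, goal3 s]
  have ha := hane s
  have hr' := hρ' s
  field_simp
  ring
end
end

section
/- Let γ be a unit-speed rectifying curve in ℝ³ with κ_γ > 0, i.e., γ(s) = a(s)T_γ(s) + b(s)B_γ(s) for smooth functions a, b (the position vector has no principal-normal component). Then γ is a concircular helix whose axis is the position vector field Y(p) = p, with ⟨N_γ(s), γ(s)⟩ = 0 for all s, and moreover a(s) = s + c for a constant c and b is a nonzero constant. -/
open scoped InnerProductSpace

noncomputable section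

/-- A unit-speed rectifying curve `γ = a T + b B` (no principal-normal
component) is a concircular helix with axis the position vector field:
`⟨N, γ⟩ = 0`; moreover `a(s) = s + c` and `b` is a nonzero constant. -/
theorem rectifying_curve_position_decomposition
    (γ T N B : ℝ → EuclideanSpace ℝ (Fin 3)) (κ τ a b : ℝ → ℝ)
    (hTunit : ∀ s, ‖T s‖ = 1) (hNunit : ∀ s, ‖N s‖ = 1) (hBunit : ∀ s, ‖B s‖ = 1)
    (hTN : ∀ s, ⟪T s, N s⟫_ℝ = 0) (hTB : ∀ s, ⟪T s, B s⟫_ℝ = 0)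
    (hNB : ∀ s, ⟪N s, B s⟫_ℝ = 0)
    (hγ' : ∀ s, deriv γ s = T s)
    (hT' : ∀ s, deriv T s = κ s • N s)
    (hN' : ∀ s, deriv N s = -κ s • T s + τ s • B s)
    (hB' : ∀ s, deriv B s = -τ s • N s)
    (hκpos : ∀ s, 0 < κ s)
    (hγd : Differentiable ℝ γ) (hTd : Differentiable ℝ T) (hBd : Differentiable ℝ B)
    (had : Differentiable ℝ a) (hbd : Differentiable ℝ b)
    -- rectifying: position vector lies in the rectifying plane
    (hrect : ∀ s, γ s = a s • T s + b s • B s) :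
    (∀ s, ⟪N s, γ s⟫_ℝ = 0) ∧
    (∃ c : ℝ, ∀ s, a s = s + c) ∧
    (∃ b₀ : ℝ, b₀ ≠ 0 ∧ ∀ s, b s = b₀) := by
  have hNT : ∀ s, ⟪N s, T s⟫_ℝ = 0 := fun s => by rw [real_inner_comm]; exact hTN s
  have hBT : ∀ s, ⟪B s, T s⟫_ℝ = 0 := fun s => by rw [real_inner_comm]; exact hTB s
  have hBN : ∀ s, ⟪B s, N s⟫_ℝ = 0 := fun s => by rw [real_inner_comm]; exact hNB s
  have hTT : ∀ s, ⟪T s, T s⟫_ℝ = 1 := fun s => by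
    rw [real_inner_self_eq_norm_sq, hTunit]; norm_num
  have hNN : ∀ s, ⟪N s, N s⟫_ℝ = 1 := fun s => by
    rw [real_inner_self_eq_norm_sq, hNunit]; norm_num
  have hBB : ∀ s, ⟪B s, B s⟫_ℝ = 1 := fun s => by
    rw [real_inner_self_eq_norm_sq, hBunit]; norm_num
  -- key equation: T s = a' T + a κ N + b' B - b τ N
  have key : ∀ s, T s = deriv a s • T s + a s • (κ s • N s)
      + (deriv b s • B s + b s • (-τ s • N s)) := by
    intro s
    have h1 : HasDerivAt (fun t => a t • T t + b t • B t)
        ((a s • deriv T s + deriv a s • T s) + (b s • deriv B s + deriv b s • B s)) s :=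
      (((had s).hasDerivAt).smul ((hTd s).hasDerivAt)).add
        (((hbd s).hasDerivAt).smul ((hBd s).hasDerivAt))
    have h2 : deriv γ s = (a s • deriv T s + deriv a s • T s)
        + (b s • deriv B s + deriv b s • B s) := by
      have : γ = fun t => a t • T t + b t • B t := funext hrect
      rw [this]; exact h1.deriv
    rw [hγ' s, hT' s, hB' s] at h2
    exact h2.trans (by module)
  have ha' : ∀ s, deriv a s = 1 := by
    intro s
    have := congrArg (fun v => ⟪T s, v⟫_ℝ) (key s)
    simpa [inner_add_right, inner_smul_right, hTT, hTN, hTB, hTunit] using this.symm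
  have hb' : ∀ s, deriv b s = 0 := by
    intro s
    have := congrArg (fun v => ⟪B s, v⟫_ℝ) (key s)
    simpa [inner_add_right, inner_smul_right, hBB, hBN, hBT, hBunit] using this.symm
  have haκ : ∀ s, a s * κ s = b s * τ s := by
    intro s
    have := congrArg (fun v => ⟪N s, v⟫_ℝ) (key s)
    simp [inner_add_right, inner_smul_right, hNN, hNT, hNB, hNunit] at this
    linarith
  have hbconst : ∀ s, b s = b 0 := fun s => is_const_of_deriv_eq_zero hbd hb' s 0
  have haform : ∀ s, a s = s + a 0 := by
    intro s
    have hd : Differentiable ℝ (fun t => a t - t) := had.sub differentiable_id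
    have hz : ∀ t, deriv (fun t => a t - t) t = 0 := by
      intro t
      have : HasDerivAt (fun t => a t - t) (deriv a t - 1) t :=
        ((had t).hasDerivAt).sub (hasDerivAt_id t)
      rw [this.deriv, ha' t]; ring
    have := is_const_of_deriv_eq_zero hd hz s 0
    simp at this; linarith
  refine ⟨?_, ⟨a 0, haform⟩, ⟨b 0, ?_, hbconst⟩⟩
  · intro s
    rw [hrect s]
    simp [inner_add_right, inner_smul_right, hNT, hNB]
  · intro hb0
    have h1 := haκ (1 - a 0)
    have h2 : b (1 - a 0) = 0 := by rw [hbconst, hb0]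
    rw [h2, haform (1 - a 0)] at h1
    nlinarith [hκpos (1 - a 0)]
end
end

section
/- Let γ be a unit-speed rectifying curve in ℝ³ with κ_γ > 0. Then (τ_γ/κ_γ)(s) = c₁s + c₀ for constants c₀ and c₁ ≠ 0. Conversely, if a unit-speed curve with κ_γ > 0 satisfies (τ_γ/κ_γ)(s) = c₁s + c₀ with c₁ ≠ 0, then a suitable translate of γ is a rectifying curve. -/
open scoped InnerProductSpace

noncomputable section

/-- Chen's characterization of rectifying curves: a unit-speed curve with
`κ > 0` is rectifying iff `τ/κ` is a non-constant affine function of arclength;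
conversely, if `τ/κ = c₁ s + c₀` with `c₁ ≠ 0` then a suitable translate of γ
is a rectifying curve. -/
theorem rectifying_curve_ratio_characterization
    (γ T N B : ℝ → EuclideanSpace ℝ (Fin 3)) (κ τ : ℝ → ℝ)
    (hTunit : ∀ s, ‖T s‖ = 1) (hNunit : ∀ s, ‖N s‖ = 1) (hBunit : ∀ s, ‖B s‖ = 1)
    (hTN : ∀ s, ⟪T s, N s⟫_ℝ = 0) (hTB : ∀ s, ⟪T s, B s⟫_ℝ = 0)
    (hNB : ∀ s, ⟪N s, B s⟫_ℝ = 0)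
    (hγ' : ∀ s, deriv γ s = T s)
    (hT' : ∀ s, deriv T s = κ s • N s)
    (hN' : ∀ s, deriv N s = -κ s • T s + τ s • B s)
    (hB' : ∀ s, deriv B s = -τ s • N s)
    (hκpos : ∀ s, 0 < κ s)
    (hγd : Differentiable ℝ γ) (hTd : Differentiable ℝ T)
    (hNd : Differentiable ℝ N) (hBd : Differentiable ℝ B) :
    ((∀ s, ⟪γ s, N s⟫_ℝ = 0) →
        ∃ c₀ c₁ : ℝ, c₁ ≠ 0 ∧ ∀ s, τ s / κ s = c₁ * s + c₀) ∧
    (∀ c₀ c₁ : ℝ, c₁ ≠ 0 → (∀ s, τ s / κ s = c₁ * s + c₀) →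
        ∃ w : EuclideanSpace ℝ (Fin 3), ∀ s, ⟪γ s + w, N s⟫_ℝ = 0) := by
  have h1 : ∀ s, HasDerivAt γ (T s) s := fun s => hγ' s ▸ (hγd s).hasDerivAt
  have h2 : ∀ s, HasDerivAt T (κ s • N s) s := fun s => hT' s ▸ (hTd s).hasDerivAt
  have h3 : ∀ s, HasDerivAt N (-κ s • T s + τ s • B s) s :=
    fun s => hN' s ▸ (hNd s).hasDerivAt
  have h4 : ∀ s, HasDerivAt B (-τ s • N s) s := fun s => hB' s ▸ (hBd s).hasDerivAt
  constructor
  · intro hrect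
    -- a(s) = ⟪γ, T⟫ has derivative 1
    have haT : ∀ s, HasDerivAt (fun t => ⟪γ t, T t⟫_ℝ) 1 s := by
      intro s
      have h := (h1 s).inner ℝ (h2 s)
      refine h.congr_deriv (Eq.symm ?_)
      rw [real_inner_smul_right, hrect s, real_inner_self_eq_norm_sq, hTunit s]
      ring
    -- b(s) = ⟪γ, B⟫ has derivative 0
    have hbB : ∀ s, HasDerivAt (fun t => ⟪γ t, B t⟫_ℝ) 0 s := by
      intro s
      have h := (h1 s).inner ℝ (h4 s)
      refine h.congr_deriv (Eq.symm ?_)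
      rw [real_inner_smul_right, hrect s, hTB s]
      ring
    have hbconst : ∀ s, ⟪γ s, B s⟫_ℝ = ⟪γ 0, B 0⟫_ℝ := by
      intro s
      exact is_const_of_deriv_eq_zero (fun t => (hbB t).differentiableAt)
        (fun t => (hbB t).deriv) s 0
    have haval : ∀ s, ⟪γ s, T s⟫_ℝ = s + ⟪γ 0, T 0⟫_ℝ := by
      intro s
      have hg : ∀ t, HasDerivAt (fun u => ⟪γ u, T u⟫_ℝ - u) 0 t := by
        intro t
        exact ((haT t).sub (hasDerivAt_id' t)).congr_deriv (sub_self 1)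
      have := is_const_of_deriv_eq_zero (fun t => (hg t).differentiableAt)
        (fun t => (hg t).deriv) s 0
      simp only [sub_zero] at this
      linarith
    -- relation: -κ a + τ b = 0
    have hrel : ∀ s, κ s * ⟪γ s, T s⟫_ℝ = τ s * ⟪γ s, B s⟫_ℝ := by
      intro s
      have h := (h1 s).inner ℝ (h3 s)
      have hzero : HasDerivAt (fun t => ⟪γ t, N t⟫_ℝ) 0 s := by
        have : (fun t => ⟪γ t, N t⟫_ℝ) = fun _ => (0 : ℝ) := funext hrect
        rw [this]; exact hasDerivAt_const s 0
      have huniq := h.unique hzero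
      rw [inner_add_right, real_inner_smul_right, real_inner_smul_right, hTN s] at huniq
      linarith
    set b0 : ℝ := ⟪γ 0, B 0⟫_ℝ with hb0def
    have hb0ne : b0 ≠ 0 := by
      intro hb0
      have h0 : ⟪γ 0, T 0⟫_ℝ = 0 := by
        have := hrel 0
        rw [← hb0def, hb0, mul_zero] at this
        exact (mul_eq_zero.mp this).resolve_left (ne_of_gt (hκpos 0))
      have h1' : ⟪γ 1, T 1⟫_ℝ = 0 := by
        have := hrel 1
        rw [hbconst 1, hb0, mul_zero] at this
        exact (mul_eq_zero.mp this).resolve_left (ne_of_gt (hκpos 1))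
      rw [haval 1, h0] at h1'
      norm_num at h1'
    refine ⟨⟪γ 0, T 0⟫_ℝ / b0, 1 / b0, one_div_ne_zero hb0ne, fun s => ?_⟩
    have hthis := hrel s
    rw [haval s, hbconst s] at hthis
    have hκne : κ s ≠ 0 := ne_of_gt (hκpos s)
    have hτs : τ s = κ s * (s + ⟪γ 0, T 0⟫_ℝ) / b0 := by
      rw [eq_div_iff hb0ne]
      linarith
    rw [hτs]
    field_simp
  · intro c₀ c₁ hc₁ hratio
    have hτ : ∀ s, τ s = κ s * (c₁ * s + c₀) := by
      intro s
      have := hratio s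
      rw [div_eq_iff (ne_of_gt (hκpos s))] at this
      linarith
    set F : ℝ → EuclideanSpace ℝ (Fin 3) :=
      fun s => γ s - (s + c₀ / c₁) • T s - c₁⁻¹ • B s with hFdef
    have hF : ∀ s, HasDerivAt F 0 s := by
      intro s
      have hid : HasDerivAt (fun t : ℝ => t + c₀ / c₁) 1 s := by
        simpa using (hasDerivAt_id s).add_const (c₀ / c₁)
      have h5 := hid.smul (h2 s)
      have h6 := (h4 s).const_smul c₁⁻¹
      have h7 := ((h1 s).sub h5).sub h6
      refine h7.congr_deriv (Eq.symm ?_)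
      rw [hτ s]
      match_scalars
      · ring
      · field_simp
        ring
    have hFconst : ∀ s, F s = F 0 :=
      fun s => is_const_of_deriv_eq_zero (fun t => (hF t).differentiableAt)
        (fun t => (hF t).deriv) s 0
    refine ⟨-F 0, fun s => ?_⟩
    have hdecomp : γ s + -F 0 = (s + c₀ / c₁) • T s + c₁⁻¹ • B s := by
      rw [← hFconst s, hFdef]
      show γ s + -(γ s - (s + c₀ / c₁) • T s - c₁⁻¹ • B s) = _
      rw [sub_sub, neg_sub, add_sub_cancel]
    have hBN : ⟪B s, N s⟫_ℝ = 0 := by rw [real_inner_comm]; exact hNB s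
    rw [hdecomp, inner_add_left, real_inner_smul_left, real_inner_smul_left, hTN s, hBN]
    ring
end
end

section
/- Let M be a surface parametrized by X(t,z) = β(t) + z(cos φ·N_β(t) + sin φ·η(t)) where β is a unit-speed curve in a totally umbilical surface of curvature c with Darboux frame (T_β, N_β, η) and φ ∈ (0, π/2) constant, and assume κ_β' ≠ 0. Then the striction line of M is α(t) = β(t) + (cos φ·κ_β(t) − √c·sin φ)^{-1}·(cos φ·N_β(t) + sin φ·η(t)), its unit tangent is T_α = cos φ·N_β + sin φ·η, its principal normal is parallel to T_β, and when c > 0 (β on a sphere centered at p₀) one has ⟨N_α(u), α(u) − p₀⟩ = 0, so α is a rectifying curve with respect to p₀. -/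
open scoped InnerProductSpace

noncomputable section

/-- The striction line of the concircular ruled surface
`X(t,z) = β(t) + z e(t)`, `e = cos φ N_β + sin φ η`, over a spherical curve β
(sphere of curvature `c > 0` centered at `p₀`) is
`α = β + (cos φ κ_β - √c sin φ)⁻¹ e`; its tangent is parallel to `e`, its
principal normal is parallel to `T_β`, and `⟨T_β, α - p₀⟩ = 0`, so that α is a
rectifying curve with respect to `p₀`. -/
theorem striction_line_is_rectifying
    (β Tβ Nβ η : ℝ → EuclideanSpace ℝ (Fin 3)) (κβ : ℝ → ℝ)
    (c φ : ℝ) (p₀ : EuclideanSpace ℝ (Fin 3))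
    (hc : 0 < c) (hφ : φ ∈ Set.Ioo 0 (Real.pi / 2))
    -- orthonormal Darboux frame on the sphere centered at p₀
    (hTu : ∀ t, ‖Tβ t‖ = 1) (hNu : ∀ t, ‖Nβ t‖ = 1) (hηu : ∀ t, ‖η t‖ = 1)
    (hTN : ∀ t, ⟪Tβ t, Nβ t⟫_ℝ = 0) (hTη : ∀ t, ⟪Tβ t, η t⟫_ℝ = 0)
    (hNη : ∀ t, ⟪Nβ t, η t⟫_ℝ = 0)
    (hβ' : ∀ t, deriv β t = Tβ t)
    (hT' : ∀ t, deriv Tβ t = -Real.sqrt c • η t + κβ t • Nβ t)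
    (hN' : ∀ t, deriv Nβ t = -κβ t • Tβ t)
    (hη' : ∀ t, deriv η t = Real.sqrt c • Tβ t)
    (hsph : ∀ t, η t = Real.sqrt c • (β t - p₀))
    (hβd : Differentiable ℝ β) (hNd : Differentiable ℝ Nβ)
    (hηd : Differentiable ℝ η) (hκd : ContDiff ℝ (⊤ : ℕ∞) κβ)
    (hκ' : ∀ t, deriv κβ t ≠ 0)
    (hden : ∀ t, Real.cos φ * κβ t - Real.sqrt c * Real.sin φ ≠ 0)
    -- the ruling direction and the candidate striction line
    (e α : ℝ → EuclideanSpace ℝ (Fin 3))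
    (he : ∀ t, e t = Real.cos φ • Nβ t + Real.sin φ • η t)
    (hα : ∀ t, α t =
      β t + (Real.cos φ * κβ t - Real.sqrt c * Real.sin φ)⁻¹ • e t) :
    -- α is the striction line of the ruled surface
    (∀ t, α t = β t - (⟪deriv β t, deriv e t⟫_ℝ / ‖deriv e t‖ ^ 2) • e t) ∧
    -- the (unit) tangent of α is parallel to e = cos φ N_β + sin φ η
    (∃ f : ℝ → ℝ, ∀ t, deriv α t = f t • e t) ∧
    -- the principal normal of α is parallel to T_β
    (∃ g : ℝ → ℝ, ∀ t, deriv e t = g t • Tβ t) ∧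
    -- α is a rectifying curve with respect to p₀
    (∀ t, ⟪Tβ t, α t - p₀⟫_ℝ = 0) := by
  have hsc : Real.sqrt c ≠ 0 := by positivity
  set D : ℝ → ℝ := fun t => Real.cos φ * κβ t - Real.sqrt c * Real.sin φ with hD
  have hDd : Differentiable ℝ D := by
    exact (differentiable_const _ |>.mul (hκd.differentiable (by simp))).sub
      (differentiable_const _)
  have hed : Differentiable ℝ e := by
    have : e = fun t => Real.cos φ • Nβ t + Real.sin φ • η t := funext he
    rw [this]; exact (hNd.fun_const_smul _).add (hηd.fun_const_smul _)
  -- derivative of e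
  have hde : ∀ t, deriv e t = (-D t) • Tβ t := by
    intro t
    have : e = fun t => Real.cos φ • Nβ t + Real.sin φ • η t := funext he
    rw [this, deriv_fun_add ((hNd t).fun_const_smul _) ((hηd t).fun_const_smul _),
      deriv_fun_const_smul _ (hNd t), deriv_fun_const_smul _ (hηd t), hN' t, hη' t]
    rw [smul_smul, smul_smul]
    rw [← add_smul]
    congr 1
    simp [hD]; ring
  refine ⟨?_, ?_, ⟨fun t => -D t, hde⟩, ?_⟩
  · intro t
    have hTT : ⟪Tβ t, Tβ t⟫_ℝ = 1 := by
      rw [real_inner_self_eq_norm_sq, hTu t]; norm_num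
    have h1 : ⟪deriv β t, deriv e t⟫_ℝ = -D t := by
      rw [hβ' t, hde t, real_inner_smul_right, hTT, mul_one]
    have h2 : ‖deriv e t‖ ^ 2 = D t ^ 2 := by
      rw [hde t, norm_smul, mul_pow, hTu t]
      simp [Real.norm_eq_abs, sq_abs]
    rw [h1, h2, hα t]
    have hne : D t ≠ 0 := hden t
    have h3 : -D t / D t ^ 2 = -(Real.cos φ * κβ t - Real.sqrt c * Real.sin φ)⁻¹ := by
      simp only [hD]
      field_simp
    rw [h3, neg_smul, sub_neg_eq_add]
  · refine ⟨fun t => deriv (fun s => (D s)⁻¹) t, fun t => ?_⟩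
    have hwd : DifferentiableAt ℝ (fun s => (D s)⁻¹) t := (hDd t).inv (hden t)
    have hαeq : α = fun s => β s + (D s)⁻¹ • e s := funext hα
    rw [hαeq, deriv_fun_add (hβd t) (hwd.fun_smul (hed t)), deriv_fun_smul hwd (hed t),
      hβ' t, hde t, smul_smul]
    have h4 : (D t)⁻¹ * -D t = -1 := by
      have hne : D t ≠ 0 := hden t
      field_simp
    rw [h4, neg_one_smul]
    abel
  · intro t
    have hβp : β t - p₀ = (Real.sqrt c)⁻¹ • η t := by
      rw [hsph t, smul_smul, inv_mul_cancel₀ hsc, one_smul]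
    rw [hα t, add_sub_right_comm, inner_add_right, hβp, he t,
      real_inner_smul_right, real_inner_smul_right, inner_add_right,
      real_inner_smul_right, real_inner_smul_right, hTN t, hTη t]
    ring
end
end
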